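/- arXiv:1407.3066 — 3 statements merged into one kernel-verified Lean document; each statement's English description precedes it below -/
import Mathlib

section
/- For nonnegative integers $m$ and $u$, the number of partitions of $m$ in which every part is at least $u+1$ equals the sum over all pairs $(i,j)$ of nonnegative integers with $i+uj=m$ of the number of partitions of $i$ whose greatest part is exactly $j$. -/
/-!
Subtracting `u` from every part maps the partitions of `m` into `j` parts, all larger than `u`,
bijectively onto the partitions of `m - u * j` into `j` parts, and conjugation (transposing the
Young diagram) maps these onto the partitions of `m - u * j` with greatest part `j`. Summing over
`j` gives the identity.
-/

/-- `b i j` is the number of partitions of `i` whose greatest part is exactly `j`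
(the empty partition has greatest part `0`). -/
noncomputable def numPartsGreatest (i j : ℕ) : ℕ :=
  Nat.card {μ : Nat.Partition i // μ.parts.sup = j}

open Finset

theorem sum_range_ite_add_mul_eq {M : Type*} [AddCommMonoid M] (g : ℕ → M) (u m j : ℕ) :
    ∑ i ∈ range (m + 1), (if i + u * j = m then g i else 0) =
      if u * j ≤ m then g (m - u * j) else 0 := by
  split_ifs with hj
  · rw [sum_eq_single_of_mem (m - u * j) (mem_range.2 (by omega)) fun i _ hi => if_neg (by omega),
      if_pos (by omega)]
  · exact sum_eq_zero fun i _ => if_neg (by omega)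

theorem finsum_cond_add_mul_eq {M : Type*} [AddCommMonoid M] (f : ℕ → ℕ → M)
    (hf : ∀ i j, i < j → f i j = 0) (u m : ℕ) :
    ∑ᶠ (i : ℕ) (j : ℕ) (_ : i + u * j = m), f i j =
      ∑ j ∈ (range (m + 1)).filter (u * · ≤ m), f (m - u * j) j := by
  have h_range : ∀ i, ∑ᶠ j, (if i + u * j = m then f i j else 0) =
      ∑ j ∈ range (m + 1), if i + u * j = m then f i j else 0 := by
    refine fun i => finsum_eq_sum_of_support_subset _ fun j hj => ?_
    simp only [Function.mem_support, ne_eq, ite_eq_right_iff, not_forall] at hj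
    simp only [coe_range, Set.mem_Iio]
    grind
  simp only [finsum_eq_if, h_range]
  rw [finsum_eq_sum_of_support_subset (s := range (m + 1)), sum_comm, sum_filter]
  · simp only [sum_range_ite_add_mul_eq]
  · intro i hi
    obtain ⟨j, -, hj⟩ := exists_ne_zero_of_sum_ne_zero hi
    simp only [coe_range, Set.mem_Iio]
    grind

theorem Nat.card_subtype_eq_sum_card_fiber {α : Type*} [Finite α] (p : α → Prop) (f : α → ℕ)
    (t : Finset ℕ) (ht : ∀ a, p a → f a ∈ t) :
    Nat.card {a // p a} = ∑ j ∈ t, Nat.card {a // p a ∧ f a = j} := by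
  classical
  have := Fintype.ofFinite α
  simp only [Nat.card_eq_fintype_card, Fintype.card_subtype, ← filter_filter]
  exact card_eq_sum_card_fiberwise fun a ha => ht a (mem_filter.1 ha).2

theorem lt_card_filter_range_iff {p : ℕ → Prop} [DecidablePred p]
    (hp : ∀ ⦃i j⦄, i ≤ j → p j → p i) {N : ℕ} (hN : ∀ j, p j → j < N) (j : ℕ) :
    j < ((range N).filter p).card ↔ p j := by
  constructor
  · intro hj
    by_contra hpj
    have : (range N).filter p ⊆ range j := fun k hk => by
      have hk := (mem_filter.1 hk).2
      exact mem_range.2 (lt_of_not_ge fun hjk => hpj (hp hjk hk))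
    exact absurd (card_le_card this) (by simpa using hj)
  · intro hpj
    have : range (j + 1) ⊆ (range N).filter p := fun k hk => by
      have hkj : k ≤ j := Nat.lt_succ_iff.1 (mem_range.1 hk)
      exact mem_filter.2 ⟨mem_range.2 ((hN j hpj).trans_le' hkj), hp hkj hpj⟩
    simpa using card_le_card this

namespace Multiset

def countGt (s : Multiset ℕ) (k : ℕ) : ℕ := card (s.filter (k < ·))

def conj (s : Multiset ℕ) : Multiset ℕ := (range s.sup).map s.countGt

variable {s : Multiset ℕ}

theorem countGt_antitone (s : Multiset ℕ) : Antitone s.countGt := fun _ _ h =>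
  card_le_card <| monotone_filter_right s fun _ hx => h.trans_lt hx

theorem countGt_pos_iff {k : ℕ} : 0 < s.countGt k ↔ k < s.sup := by
  rw [countGt, card_pos_iff_exists_mem, ← not_le, sup_le]
  simp

theorem countGt_eq_count_add_countGt (s : Multiset ℕ) (k : ℕ) :
    s.countGt k = s.count (k + 1) + s.countGt (k + 1) := by
  induction s using Multiset.induction_on with
  | empty => simp [countGt]
  | cons a s ih =>
    simp only [countGt, filter_cons, count_cons] at ih ⊢
    split_ifs <;> simp_all <;> omega

theorem countGt_zero (hs : 0 ∉ s) : s.countGt 0 = card s := by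
  rw [countGt, filter_eq_self.2 fun a ha => Nat.pos_of_ne_zero (ne_of_mem_of_not_mem ha hs)]

theorem eq_of_countGt_eq {t : Multiset ℕ} (hs : 0 ∉ s) (ht : 0 ∉ t)
    (h : ∀ k, s.countGt k = t.countGt k) : s = t := by
  ext (_ | k)
  · rw [count_eq_zero.2 hs, count_eq_zero.2 ht]
  · have := s.countGt_eq_count_add_countGt k
    have := t.countGt_eq_count_add_countGt k
    have := h k
    have := h (k + 1)
    omega

theorem sum_range_countGt {N : ℕ} (hN : ∀ x ∈ s, x ≤ N) :
    ∑ k ∈ Finset.range N, s.countGt k = s.sum := by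
  induction s using Multiset.induction_on with
  | empty => simp [countGt]
  | cons a s ih =>
    have ha : a ≤ N := hN a (mem_cons_self a s)
    have hcons : ∀ k, (a ::ₘ s).countGt k = s.countGt k + if k < a then 1 else 0 := fun k => by
      simp only [countGt, filter_cons]
      split_ifs <;> simp [add_comm]
    rw [Finset.sum_congr rfl fun k _ => hcons k, Finset.sum_add_distrib,
      ih fun x hx => hN x (mem_cons_of_mem hx), Finset.sum_boole, Finset.range_eq_Ico,
      Finset.Ico_filter_lt, min_eq_right ha]
    simp [add_comm]

theorem zero_notMem_conj (s : Multiset ℕ) : 0 ∉ s.conj := by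
  simp [conj, countGt_pos_iff, Nat.pos_iff_ne_zero.symm]

theorem sum_conj (s : Multiset ℕ) : s.conj.sum = s.sum := by
  rw [← sum_range_countGt (s := s) fun _ => le_sup]
  rfl

theorem sup_conj (hs : 0 ∉ s) : s.conj.sup = card s := by
  refine le_antisymm (sup_le.2 fun a ha => ?_) ?_
  · obtain ⟨k, -, rfl⟩ := mem_map.1 ha
    exact card_le_card (filter_le _ _)
  · rcases (card s).eq_zero_or_pos with h | h
    · exact h.trans_le (Nat.zero_le _)
    · rw [← countGt_zero hs] at h ⊢
      exact le_sup (mem_map.2 ⟨0, mem_range.2 (countGt_pos_iff.1 h), rfl⟩)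

theorem countGt_conj (s : Multiset ℕ) (i : ℕ) :
    s.conj.countGt i = ((Finset.range s.sup).filter (i < s.countGt ·)).card := by
  rw [conj, countGt, filter_map, card_map]
  rfl

/-- Cell `(i, j)` lies in the Young diagram of `s.conj` iff `(j, i)` lies in that of `s`. -/
theorem lt_countGt_conj_iff (s : Multiset ℕ) (i j : ℕ) :
    j < s.conj.countGt i ↔ i < s.countGt j := by
  rw [countGt_conj]
  exact lt_card_filter_range_iff (fun _ _ h hj => hj.trans_le (s.countGt_antitone h))
    (fun _ hj => countGt_pos_iff.1 (i.zero_le.trans_lt hj)) j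

theorem conj_conj (hs : 0 ∉ s) : s.conj.conj = s :=
  eq_of_countGt_eq (zero_notMem_conj _) hs fun i => eq_of_forall_lt_iff fun j => by
    rw [lt_countGt_conj_iff, lt_countGt_conj_iff]

end Multiset

theorem Multiset.map_sub_map_add_cancel (s : Multiset ℕ) {u : ℕ} (h : ∀ x ∈ s, u ≤ x) :
    (s.map (· - u)).map (· + u) = s := by
  rw [Multiset.map_map]
  exact (Multiset.map_congr rfl fun x hx => Nat.sub_add_cancel (h x hx)).trans s.map_id

theorem Multiset.sum_map_add_const (s : Multiset ℕ) (u : ℕ) :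
    (s.map (· + u)).sum = s.sum + Multiset.card s * u := by
  simp [Multiset.sum_map_add]

namespace Nat.Partition

variable {n : ℕ}

theorem zero_notMem_parts (μ : n.Partition) : 0 ∉ μ.parts := fun h => (μ.parts_pos h).false

def conj (μ : n.Partition) : n.Partition where
  parts := μ.parts.conj
  parts_pos hi := Nat.pos_of_ne_zero (ne_of_mem_of_not_mem hi (Multiset.zero_notMem_conj _))
  parts_sum := by rw [Multiset.sum_conj, μ.parts_sum]

theorem conj_conj (μ : n.Partition) : μ.conj.conj = μ :=
  Nat.Partition.ext (Multiset.conj_conj μ.zero_notMem_parts)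

theorem sup_parts_conj (μ : n.Partition) : μ.conj.parts.sup = Multiset.card μ.parts :=
  Multiset.sup_conj μ.zero_notMem_parts

theorem sup_parts_le (μ : n.Partition) : μ.parts.sup ≤ n :=
  Multiset.sup_le.2 fun _ => le_of_mem_parts

theorem card_parts_mul_le {u : ℕ} (μ : n.Partition) (h : ∀ x ∈ μ.parts, u ≤ x) :
    Multiset.card μ.parts * u ≤ n := by
  simpa [μ.parts_sum] using Multiset.card_nsmul_le_sum h

def conjEquiv : n.Partition ≃ n.Partition :=
  Function.Involutive.toPerm conj conj_conj

def subPartsEquiv (k u j : ℕ) :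
    {μ : (k + u * j).Partition // (∀ x ∈ μ.parts, u + 1 ≤ x) ∧ Multiset.card μ.parts = j} ≃
      {ν : k.Partition // Multiset.card ν.parts = j} where
  toFun μ := ⟨⟨μ.1.parts.map (· - u),
    fun hi => by
      obtain ⟨x, hx, rfl⟩ := Multiset.mem_map.1 hi
      exact Nat.sub_pos_of_lt (μ.2.1 x hx),
    by
      have hsum := Multiset.sum_map_add_const (μ.1.parts.map (· - u)) u
      rw [Multiset.map_sub_map_add_cancel _ fun x hx => (μ.2.1 x hx).trans' u.le_succ,
        μ.1.parts_sum, Multiset.card_map, μ.2.2] at hsum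
      linarith⟩, by simpa using μ.2.2⟩
  invFun ν := ⟨⟨ν.1.parts.map (· + u),
    fun hi => by
      obtain ⟨x, hx, rfl⟩ := Multiset.mem_map.1 hi
      exact Nat.add_pos_left (ν.1.parts_pos hx) u,
    by rw [Multiset.sum_map_add_const, ν.1.parts_sum, ν.2, mul_comm]⟩,
    fun x hx => by
      obtain ⟨y, hy, rfl⟩ := Multiset.mem_map.1 hx
      have := ν.1.parts_pos hy
      omega,
    by simpa using ν.2⟩
  left_inv μ := Subtype.ext <| Nat.Partition.ext <|
    Multiset.map_sub_map_add_cancel _ fun x hx => (μ.2.1 x hx).trans' u.le_succ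
  right_inv ν := Subtype.ext <| Nat.Partition.ext <| by simp [Multiset.map_map]

end Nat.Partition

theorem numPartsGreatest_eq_zero_of_lt {i j : ℕ} (h : i < j) : numPartsGreatest i j = 0 :=
  Nat.card_eq_zero.2 <| Or.inl ⟨fun μ => (μ.1.sup_parts_le.trans_lt (μ.2.symm ▸ h)).false⟩

theorem card_parts_gt_card_parts_eq_numPartsGreatest (k u j : ℕ) :
    Nat.card {μ : (k + u * j).Partition // (∀ x ∈ μ.parts, u + 1 ≤ x) ∧
      Multiset.card μ.parts = j} = numPartsGreatest k j :=
  Nat.card_congr <| (Nat.Partition.subPartsEquiv k u j).trans <|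
    Nat.Partition.conjEquiv.subtypeEquiv fun ν => by rw [← ν.sup_parts_conj]; rfl

theorem stmt0 (m u : ℕ) :
    Nat.card {μ : Nat.Partition m // ∀ x ∈ μ.parts, u + 1 ≤ x} =
      ∑ᶠ (i : ℕ) (j : ℕ) (_ : i + u * j = m), numPartsGreatest i j := by
  rw [finsum_cond_add_mul_eq _ (fun _ _ => numPartsGreatest_eq_zero_of_lt),
    Nat.card_subtype_eq_sum_card_fiber _ (fun μ => Multiset.card μ.parts) _ fun μ hμ => ?_]
  · refine sum_congr rfl fun j hj => ?_
    obtain ⟨k, rfl⟩ := Nat.exists_eq_add_of_le' (mem_filter.1 hj).2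
    rw [Nat.add_sub_cancel, card_parts_gt_card_parts_eq_numPartsGreatest]
  · have := μ.card_parts_mul_le hμ
    simp only [mem_filter, mem_range]
    constructor <;> nlinarith
end

section
/- Let $p$ be a prime and let $G = \prod_{i=1}^k (\mathbb{Z}/p^{e_i}\mathbb{Z})^{r_i}$ with $e_1 > e_2 > \cdots > e_k > 0$ and $r_i \geq 0$. Then $|\mathrm{Aut}(G)| = \left(\prod_{i=1}^k \prod_{s=1}^{r_i}(1-p^{-s})\right) \cdot \prod_{1 \le i,j \le k} p^{\min(e_i,e_j) r_i r_j}$. -/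
section Aux

lemma mul_lt_of_fin {m c : ℕ} (hc : 0 < c) (h : c ∣ m) (i : ℕ) (hi : i < m / c) :
    c * i < m := by
  calc c * i < c * (m / c) := Nat.mul_lt_mul_of_le_of_lt (le_refl c) hi hc
    _ = m := Nat.mul_div_cancel' h

/-- Count of elements of `ZMod m` with value divisible by `c`, where `c ∣ m`. -/
lemma card_dvd_val {m c : ℕ} (hm : m ≠ 0) (hc : 0 < c) (h : c ∣ m) :
    Nat.card {x : ZMod m // c ∣ x.val} = m / c := by
  haveI : NeZero m := ⟨hm⟩
  have e : {x : ZMod m // c ∣ x.val} ≃ Fin (m / c) :=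
    { toFun := fun x => ⟨x.1.val / c, Nat.div_lt_div_of_lt_of_dvd h (ZMod.val_lt x.1)⟩
      invFun := fun i => ⟨((c * i : ℕ) : ZMod m), by
        rw [ZMod.val_natCast, Nat.mod_eq_of_lt (mul_lt_of_fin hc h _ i.2)]
        exact Dvd.intro _ rfl⟩
      left_inv := fun x => by
        apply Subtype.ext
        show ((c * (x.1.val / c) : ℕ) : ZMod m) = x.1
        rw [Nat.mul_div_cancel' x.2]
        exact ZMod.natCast_rightInverse x.1
      right_inv := fun i => by
        apply Fin.ext
        show ((c * i : ℕ) : ZMod m).val / c = i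
        rw [ZMod.val_natCast, Nat.mod_eq_of_lt (mul_lt_of_fin hc h _ i.2),
          Nat.mul_div_cancel_left _ hc] }
  rw [Nat.card_congr e, Nat.card_eq_fintype_card, Fintype.card_fin]

lemma smul_zero_iff_dvd {m n : ℕ} [NeZero m] (x : ZMod m) :
    n • x = 0 ↔ m ∣ n * x.val := by
  have : n • x = ((n * x.val : ℕ) : ZMod m) := by
    push_cast
    rw [nsmul_eq_mul, ZMod.natCast_rightInverse x]
  rw [this, ZMod.natCast_eq_zero_iff]

/-- `Nat.card (ZMod (p^a) →+ ZMod (p^b)) = p ^ min a b` -/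
lemma card_hom_cyclic {p : ℕ} (hp : 0 < p) (a b : ℕ) :
    Nat.card (ZMod (p ^ a) →+ ZMod (p ^ b)) = p ^ min a b := by
  haveI : NeZero (p ^ b) := ⟨pow_ne_zero _ hp.ne'⟩
  have e1 : (ZMod (p ^ a) →+ ZMod (p ^ b)) ≃ {f : ℤ →+ ZMod (p ^ b) // f ((p ^ a : ℕ) : ℤ) = 0} :=
    (ZMod.lift (p ^ a)).symm
  have e2 : {f : ℤ →+ ZMod (p ^ b) // f ((p ^ a : ℕ) : ℤ) = 0}
      ≃ {x : ZMod (p ^ b) // (p ^ a) • x = 0} :=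
    ((Equiv.subtypeEquiv (zmultiplesHom (ZMod (p ^ b))) (fun x => by
      rw [zmultiplesHom_apply, natCast_zsmul]))).symm
  rw [Nat.card_congr (e1.trans e2)]
  rcases le_or_gt b a with hba | hab
  · rw [min_eq_right hba]
    have : ∀ x : ZMod (p ^ b), (p ^ a) • x = 0 := by
      intro x
      rw [smul_zero_iff_dvd]
      exact Dvd.dvd.mul_right (pow_dvd_pow p hba) _
    rw [Nat.card_congr (Equiv.subtypeUnivEquiv this), Nat.card_zmod]
  · rw [min_eq_left hab.le]
    have key : ∀ x : ZMod (p ^ b), ((p ^ a) • x = 0 ↔ p ^ (b - a) ∣ x.val) := by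
      intro x
      rw [smul_zero_iff_dvd]
      constructor
      · intro h
        have h' : p ^ a * p ^ (b - a) ∣ p ^ a * x.val := by
          rw [← pow_add, Nat.add_sub_cancel' hab.le]; exact h
        exact (Nat.mul_dvd_mul_iff_left (pow_pos hp a)).mp h'
      · intro h
        have h' : p ^ a * p ^ (b - a) ∣ p ^ a * x.val := Nat.mul_dvd_mul_left _ h
        rwa [← pow_add, Nat.add_sub_cancel' hab.le] at h'
    have e3 : {x : ZMod (p ^ b) // (p ^ a) • x = 0} ≃ {x : ZMod (p ^ b) // p ^ (b - a) ∣ x.val} :=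
      Equiv.subtypeEquiv (Equiv.refl _) (fun x => key x)
    rw [Nat.card_congr e3,
      card_dvd_val (pow_ne_zero _ hp.ne') (pow_pos hp _) (pow_dvd_pow p (Nat.sub_le b a)),
      Nat.pow_div (Nat.sub_le b a) hp, Nat.sub_sub_self hab.le]

end Aux

section HomPi

variable {ι : Type*} [Fintype ι] [DecidableEq ι]

/-- Homs out of a finite product decompose. -/
noncomputable def homPiLeftEquiv (A : ι → Type*) [∀ i, AddCommGroup (A i)]
    (B : Type*) [AddCommGroup B] : ((∀ i, A i) →+ B) ≃ ∀ i, (A i →+ B) :=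
  ((addMonoidHomLequivInt ℤ).toEquiv.trans
    (LinearMap.lsum ℤ A ℤ).symm.toEquiv).trans
    (Equiv.piCongrRight fun i => (addMonoidHomLequivInt (R := ℤ) ).symm.toEquiv)

/-- Homs into a product decompose. -/
def homPiRightEquiv (B : Type*) [AddCommGroup B] (C : ι → Type*) [∀ j, AddCommGroup (C j)] :
    (B →+ ∀ j, C j) ≃ ∀ j, (B →+ C j) where
  toFun f := fun j => (Pi.evalAddMonoidHom C j).comp f
  invFun g := { toFun := fun b j => g j b,
                map_zero' := by funext j; simp,
                map_add' := fun x y => by funext j; simp }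
  left_inv f := by ext b j; rfl
  right_inv g := by ext j b; rfl

lemma card_hom_block {p : ℕ} (hp : 0 < p) (a b r s : ℕ) :
    Nat.card ((Fin r → ZMod (p ^ a)) →+ (Fin s → ZMod (p ^ b))) = p ^ (min a b * r * s) := by
  rw [Nat.card_congr ((homPiLeftEquiv _ _).trans
    (Equiv.piCongrRight fun u => homPiRightEquiv _ _))]
  rw [Nat.card_pi]
  simp only [Nat.card_pi, card_hom_cyclic hp a b, Finset.prod_const, Finset.card_univ,
    Fintype.card_fin]
  rw [← pow_mul, ← pow_mul, mul_assoc, mul_comm s r]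

end HomPi



section Key

lemma nilp_fix {X : Type*} [AddCommMonoid X] {p N : ℕ} (hX : ∀ x : X, p ^ N • x = 0)
    (ν : X →+ X) (hν : ∀ x, ∃ y, ν x = p • y) {h : X} (hfix : ν h = h) : h = 0 := by
  have key : ∀ n : ℕ, ∃ y, h = p ^ n • y := by
    intro n
    induction n with
    | zero => exact ⟨h, by simp⟩
    | succ n ih =>
      obtain ⟨y, hy⟩ := ih
      obtain ⟨z, hz⟩ := hν y
      refine ⟨z, ?_⟩
      calc h = ν h := hfix.symm
        _ = ν (p ^ n • y) := by rw [← hy]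
        _ = p ^ n • ν y := by rw [AddMonoidHom.map_nsmul]
        _ = p ^ n • (p • z) := by rw [hz]
        _ = p ^ (n + 1) • z := by rw [pow_succ, mul_nsmul]; exact smul_comm _ _ _
  obtain ⟨y, hy⟩ := key N
  rw [hy]
  exact hX y

variable {A H : Type*} [AddCommGroup A] [AddCommGroup H]

lemma bij_block [Finite A] [Finite H] {p e' E : ℕ}
    (hH : ∀ h : H, p ^ e' • h = 0)
    (hA : ∀ a : A, p ^ e' • a = 0 → ∃ b : A, a = p • b)
    (hE : ∀ a : A, p ^ E • a = 0)
    (α : A →+ A) (β : H →+ A) (γ : A →+ H) (δ : H →+ H) :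
    Function.Bijective (fun x : A × H => (α x.1 + β x.2, γ x.1 + δ x.2)) ↔
      Function.Bijective α ∧ Function.Bijective δ := by
  have hβ : ∀ h : H, ∃ b : A, β h = p • b := fun h =>
    hA _ (by rw [← AddMonoidHom.map_nsmul, hH, map_zero])
  constructor
  · intro hbij
    set φhom : (A × H) →+ (A × H) :=
      ((α.comp (AddMonoidHom.fst A H) + β.comp (AddMonoidHom.snd A H)).prod
        (γ.comp (AddMonoidHom.fst A H) + δ.comp (AddMonoidHom.snd A H))) with hφ
    have hbij' : Function.Bijective φhom := hbij
    let χ := (AddEquiv.ofBijective φhom hbij').symm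
    set α' : A →+ A := (AddMonoidHom.fst A H).comp
      (χ.toAddMonoidHom.comp (AddMonoidHom.inl A H)) with hα'
    set β' : H →+ A := (AddMonoidHom.fst A H).comp
      (χ.toAddMonoidHom.comp (AddMonoidHom.inr A H)) with hβ'
    set γ' : A →+ H := (AddMonoidHom.snd A H).comp
      (χ.toAddMonoidHom.comp (AddMonoidHom.inl A H)) with hγ'
    set δ' : H →+ H := (AddMonoidHom.snd A H).comp
      (χ.toAddMonoidHom.comp (AddMonoidHom.inr A H)) with hδ'
    have hχ : ∀ x : A × H, χ x = (α' x.1 + β' x.2, γ' x.1 + δ' x.2) := by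
      intro x
      have hsum : χ x = χ (x.1, 0) + χ (0, x.2) := by
        rw [← map_add]
        congr 1
        ext <;> simp
      rw [hsum]
      rfl
    have hid : ∀ x : A × H, χ (φhom x) = x := fun x =>
      (AddEquiv.ofBijective φhom hbij').symm_apply_apply x
    have star : ∀ a : A, α' (α a) + β' (γ a) = a := by
      intro a
      have h0 := hid (a, 0)
      rw [show φhom (a, 0) = (α a, γ a) by simp [hφ], hχ] at h0
      simpa using congrArg Prod.fst h0
    have star2 : ∀ h : H, γ' (β h) + δ' (δ h) = h := by
      intro h
      have h0 := hid (0, h)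
      rw [show φhom (0, h) = (β h, δ h) by simp [hφ], hχ] at h0
      simpa using congrArg Prod.snd h0
    constructor
    · rw [← Finite.injective_iff_bijective]
      intro a₁ a₂ hEq
      rw [← sub_eq_zero]
      have hαa : α (a₁ - a₂) = 0 := by rw [map_sub, hEq, sub_self]
      have hfix : (β'.comp γ) (a₁ - a₂) = a₁ - a₂ := by
        have h0 := star (a₁ - a₂)
        rw [hαa, map_zero, zero_add] at h0
        simpa using h0
      exact nilp_fix hE (β'.comp γ) (fun x => hA _ (by
        rw [AddMonoidHom.comp_apply, ← AddMonoidHom.map_nsmul β', hH, map_zero])) hfix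
    · rw [← Finite.injective_iff_bijective]
      intro h₁ h₂ hEq
      rw [← sub_eq_zero]
      have hδh : δ (h₁ - h₂) = 0 := by rw [map_sub, hEq, sub_self]
      have hfix : (γ'.comp β) (h₁ - h₂) = h₁ - h₂ := by
        have h0 := star2 (h₁ - h₂)
        rw [hδh, map_zero, add_zero] at h0
        simpa using h0
      refine nilp_fix hH (γ'.comp β) (fun x => ?_) hfix
      obtain ⟨b, hb⟩ := hβ x
      exact ⟨γ' b, by rw [AddMonoidHom.comp_apply, hb, AddMonoidHom.map_nsmul]⟩
  · rintro ⟨bα, bδ⟩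
    rw [← Finite.injective_iff_bijective]
    set αe := AddEquiv.ofBijective α bα with hαe
    set δe := AddEquiv.ofBijective δ bδ with hδe
    intro x y hxy
    set a := x.1 - y.1 with ha
    set h := x.2 - y.2 with hhdef
    have h1 : α a + β h = 0 := by
      have := congrArg Prod.fst hxy
      simp only [ha, hhdef, map_sub]
      simp only at this
      rw [sub_add_sub_comm, this, sub_self]
    have h2 : γ a + δ h = 0 := by
      have := congrArg Prod.snd hxy
      simp only [ha, hhdef, map_sub]
      simp only at this
      rw [sub_add_sub_comm, this, sub_self]
    set ν : H →+ H := δe.symm.toAddMonoidHom.comp (γ.comp (αe.symm.toAddMonoidHom.comp β))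
      with hν
    have hβa : αe.symm (β h) = -a := by
      apply αe.injective
      rw [AddEquiv.apply_symm_apply]
      show β h = α (-a)
      rw [map_neg, eq_neg_iff_add_eq_zero, add_comm]
      exact h1
    have hfix : ν h = h := by
      show δe.symm (γ (αe.symm (β h))) = h
      rw [hβa, map_neg]
      have hγa : γ a = -δ h := by rw [eq_neg_iff_add_eq_zero]; exact h2
      rw [hγa, neg_neg]
      have : δe h = δ h := rfl
      rw [← this, AddEquiv.symm_apply_apply]
    have hnu : ∀ z : H, ∃ w, ν z = p • w := by
      intro z
      obtain ⟨b, hb⟩ := hβ z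
      refine ⟨δe.symm (γ (αe.symm b)), ?_⟩
      show δe.symm (γ (αe.symm (β z))) = _
      rw [hb, map_nsmul, map_nsmul, map_nsmul]
    have hh0 : h = 0 := nilp_fix hH ν hnu hfix
    have hβh : β h = 0 := by rw [hh0, map_zero]
    have ha0 : a = 0 := by
      apply bα.injective
      rw [map_zero]
      rw [hβh, add_zero] at h1
      exact h1
    have e1 : x.1 = y.1 := by rwa [← sub_eq_zero]
    have e2 : x.2 = y.2 := by rwa [← sub_eq_zero]
    exact Prod.ext e1 e2
  
end Key


section Decomp

variable (A H : Type*) [AddCommGroup A] [AddCommGroup H]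

/-- Decomposition of endomorphisms of a product into four blocks. -/
def endProdEquiv : ((A × H) →+ (A × H)) ≃ ((A →+ A) × (H →+ A) × (A →+ H) × (H →+ H)) where
  toFun f := ((AddMonoidHom.fst A H).comp (f.comp (AddMonoidHom.inl A H)),
    (AddMonoidHom.fst A H).comp (f.comp (AddMonoidHom.inr A H)),
    (AddMonoidHom.snd A H).comp (f.comp (AddMonoidHom.inl A H)),
    (AddMonoidHom.snd A H).comp (f.comp (AddMonoidHom.inr A H)))
  invFun q := (q.1.coprod q.2.1).prod (q.2.2.1.coprod q.2.2.2)
  left_inv f := by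
    apply AddMonoidHom.ext
    intro x
    have hadd : f (x.1, 0) + f (0, x.2) = f x := by
      rw [← map_add]
      congr 1
      ext <;> simp
    calc _ = f (x.1, 0) + f (0, x.2) := rfl
      _ = f x := hadd
  right_inv q := by
    refine Prod.ext ?_ (Prod.ext ?_ (Prod.ext ?_ ?_)) <;>
      · apply AddMonoidHom.ext
        intro z
        simp
  
lemma endProdEquiv_symm_apply (q : (A →+ A) × (H →+ A) × (A →+ H) × (H →+ H)) (x : A × H) :
    (endProdEquiv A H).symm q x = (q.1 x.1 + q.2.1 x.2, q.2.2.1 x.1 + q.2.2.2 x.2) := rfl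

/-- Automorphisms as bijective endomorphisms. -/
noncomputable def autEquivBijEnd : AddAut A ≃ {f : A →+ A // Function.Bijective f} where
  toFun g := ⟨g.toAddMonoidHom, g.bijective⟩
  invFun f := AddEquiv.ofBijective f.1 f.2
  left_inv g := by ext x; rfl
  right_inv f := by apply Subtype.ext; apply AddMonoidHom.ext; intro x; rfl

/-- Counting bijective block endomorphisms. -/
lemma card_aut_prod [Finite A] [Finite H] {p e' E : ℕ}
    (hH : ∀ h : H, p ^ e' • h = 0)
    (hA : ∀ a : A, p ^ e' • a = 0 → ∃ b : A, a = p • b)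
    (hE : ∀ a : A, p ^ E • a = 0) :
    Nat.card (AddAut (A × H)) =
      Nat.card (AddAut A) * Nat.card (H →+ A) * Nat.card (A →+ H) * Nat.card (AddAut H) := by
  rw [Nat.card_congr (autEquivBijEnd (A × H)), Nat.card_congr (autEquivBijEnd A),
    Nat.card_congr (autEquivBijEnd H)]
  have e1 : {f : (A × H) →+ (A × H) // Function.Bijective f} ≃
      {q : (A →+ A) × (H →+ A) × (A →+ H) × (H →+ H) //
        Function.Bijective q.1 ∧ Function.Bijective q.2.2.2} := by
    refine (Equiv.subtypeEquiv (endProdEquiv A H) ?_)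
    intro f
    rw [← bij_block hH hA hE ((endProdEquiv A H) f).1 ((endProdEquiv A H) f).2.1
      ((endProdEquiv A H) f).2.2.1 ((endProdEquiv A H) f).2.2.2]
    constructor
    · intro hf
      have : (fun x : A × H => (((endProdEquiv A H) f).1 x.1 + ((endProdEquiv A H) f).2.1 x.2,
          ((endProdEquiv A H) f).2.2.1 x.1 + ((endProdEquiv A H) f).2.2.2 x.2)) = ⇑f := by
        funext x
        rw [← endProdEquiv_symm_apply, Equiv.symm_apply_apply]
      rw [this]
      exact hf
    · intro hf
      have : (fun x : A × H => (((endProdEquiv A H) f).1 x.1 + ((endProdEquiv A H) f).2.1 x.2,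
          ((endProdEquiv A H) f).2.2.1 x.1 + ((endProdEquiv A H) f).2.2.2 x.2)) = ⇑f := by
        funext x
        rw [← endProdEquiv_symm_apply, Equiv.symm_apply_apply]
      rwa [this] at hf
  have e2 : {q : (A →+ A) × (H →+ A) × (A →+ H) × (H →+ H) //
        Function.Bijective q.1 ∧ Function.Bijective q.2.2.2} ≃
      {α : A →+ A // Function.Bijective α} × (H →+ A) × (A →+ H) ×
        {δ : H →+ H // Function.Bijective δ} :=
    { toFun := fun q => (⟨q.1.1, q.2.1⟩, q.1.2.1, q.1.2.2.1, ⟨q.1.2.2.2, q.2.2⟩)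
      invFun := fun t => ⟨(t.1.1, t.2.1, t.2.2.1, t.2.2.2.1), ⟨t.1.2, t.2.2.2.2⟩⟩
      left_inv := fun q => rfl
      right_inv := fun t => rfl }
  rw [Nat.card_congr (e1.trans e2), Nat.card_prod, Nat.card_prod, Nat.card_prod]
  ring

end Decomp


section Preimage

/-- Counting a preimage of a set under a surjective additive hom. -/
lemma card_preimage_hom {G H : Type*} [AddCommGroup G] [AddCommGroup H] (f : G →+ H)
    (hf : Function.Surjective f) (S : Set H) :
    Nat.card (f ⁻¹' S) = Nat.card (f ⁻¹' ({0} : Set H)) * Nat.card S := by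
  have e : (f ⁻¹' S) ≃ (f ⁻¹' ({0} : Set H)) × S :=
    { toFun := fun x => (⟨x.1 - Function.surjInv hf (f x.1), by
        simp [Set.mem_preimage, map_sub, Function.surjInv_eq hf]⟩, ⟨f x.1, x.2⟩)
      invFun := fun t => ⟨t.1.1 + Function.surjInv hf t.2.1, by
        have h1 : f t.1.1 = 0 := t.1.2
        simp only [Set.mem_preimage, map_add, h1, zero_add, Function.surjInv_eq hf]
        exact t.2.2⟩
      left_inv := fun x => by
        apply Subtype.ext
        simp
      right_inv := fun t => by
        have h1 : f t.1.1 = 0 := t.1.2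
        refine Prod.ext (Subtype.ext ?_) (Subtype.ext ?_) <;>
          simp [map_add, h1, Function.surjInv_eq hf] }
  rw [Nat.card_congr e, Nat.card_prod]

end Preimage

section Base

lemma isUnit_zmod_pow_iff {p : ℕ} (hp : p.Prime) {e : ℕ} (he : 0 < e) (x : ZMod (p ^ e)) :
    IsUnit x ↔ ¬ p ∣ x.val := by
  haveI : NeZero (p ^ e) := ⟨pow_ne_zero _ hp.pos.ne'⟩
  have h1 : IsUnit x ↔ IsUnit ((x.val : ℕ) : ZMod (p ^ e)) := by
    rw [ZMod.natCast_rightInverse x]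
  rw [h1, ZMod.isUnit_iff_coprime, Nat.coprime_pow_right_iff he,
    Nat.coprime_comm, hp.coprime_iff_not_dvd]

lemma isUnit_zmod_pow_iff_cast {p : ℕ} (hp : p.Prime) {e : ℕ} (he : 0 < e) (x : ZMod (p ^ e)) :
    IsUnit x ↔ IsUnit ((ZMod.castHom (dvd_pow_self p he.ne') (ZMod p)) x) := by
  haveI : NeZero (p ^ e) := ⟨pow_ne_zero _ hp.pos.ne'⟩
  haveI : Fact p.Prime := ⟨hp⟩
  have h2 : (ZMod.castHom (dvd_pow_self p he.ne') (ZMod p)) x = ((x.val : ℕ) : ZMod p) := by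
    rw [ZMod.castHom_apply, ← ZMod.natCast_val]
  rw [isUnit_zmod_pow_iff hp he, h2, isUnit_iff_ne_zero, ne_eq,
    ZMod.natCast_eq_zero_iff]

lemma castHom_zero_iff {p : ℕ} (hp : p.Prime) {e : ℕ} (he : 0 < e) (x : ZMod (p ^ e)) :
    (ZMod.castHom (dvd_pow_self p he.ne') (ZMod p)) x = 0 ↔ p ∣ x.val := by
  haveI : NeZero (p ^ e) := ⟨pow_ne_zero _ hp.pos.ne'⟩
  have h2 : (ZMod.castHom (dvd_pow_self p he.ne') (ZMod p)) x = ((x.val : ℕ) : ZMod p) := by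
    rw [ZMod.castHom_apply, ← ZMod.natCast_val]
  rw [h2, ZMod.natCast_eq_zero_iff]

lemma card_ker_cast {p : ℕ} (hp : p.Prime) {e : ℕ} (he : 0 < e) :
    Nat.card {x : ZMod (p ^ e) // (ZMod.castHom (dvd_pow_self p he.ne') (ZMod p)) x = 0}
      = p ^ (e - 1) := by
  have e1 : {x : ZMod (p ^ e) // (ZMod.castHom (dvd_pow_self p he.ne') (ZMod p)) x = 0}
      ≃ {x : ZMod (p ^ e) // p ∣ x.val} :=
    Equiv.subtypeEquiv (Equiv.refl _) (fun x => castHom_zero_iff hp he x)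
  rw [Nat.card_congr e1, card_dvd_val (pow_ne_zero _ hp.pos.ne') hp.pos
    (dvd_pow_self p he.ne')]
  have h3 : p ^ e / p ^ 1 = p ^ (e - 1) := Nat.pow_div he hp.pos
  rwa [pow_one] at h3

end Base


section GLCount

/-- A subtype of unit elements is equivalent to the units. -/
noncomputable def isUnitEquivUnits {M : Type*} [Monoid M] : {x : M // IsUnit x} ≃ Mˣ where
  toFun x := x.2.unit
  invFun u := ⟨u, u.isUnit⟩
  left_inv x := Subtype.ext rfl
  right_inv u := Units.ext rfl

/-- Count of matrices over `ZMod (p^e)` with invertible determinant. -/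
lemma card_unit_det {p : ℕ} (hp : p.Prime) {e : ℕ} (he : 0 < e) (r : ℕ) :
    Nat.card {M : Matrix (Fin r) (Fin r) (ZMod (p ^ e)) // IsUnit M.det} =
      (p ^ (e - 1)) ^ (r * r) * ∏ i : Fin r, (p ^ r - p ^ (i : ℕ)) := by
  haveI : NeZero (p ^ e) := ⟨pow_ne_zero _ hp.pos.ne'⟩
  haveI : Fact p.Prime := ⟨hp⟩
  set c : ZMod (p ^ e) →+* ZMod p := ZMod.castHom (dvd_pow_self p he.ne') (ZMod p) with hc
  set Φ : Matrix (Fin r) (Fin r) (ZMod (p ^ e)) →+* Matrix (Fin r) (Fin r) (ZMod p) :=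
    c.mapMatrix with hΦ
  have hcsurj : Function.Surjective c := by
    intro y
    refine ⟨((y.val : ℕ) : ZMod (p ^ e)), ?_⟩
    rw [map_natCast]
    exact ZMod.natCast_rightInverse y
  have hsurj : Function.Surjective Φ.toAddMonoidHom := by
    intro N
    refine ⟨Matrix.of (fun i j => Function.surjInv hcsurj (N i j)), ?_⟩
    ext i j
    exact Function.surjInv_eq hcsurj (N i j)
  set S : Set (Matrix (Fin r) (Fin r) (ZMod p)) := {N | IsUnit N.det} with hS
  have e1 : {M : Matrix (Fin r) (Fin r) (ZMod (p ^ e)) // IsUnit M.det}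
      ≃ (Φ.toAddMonoidHom ⁻¹' S) := by
    refine Equiv.subtypeEquiv (Equiv.refl _) (fun M => ?_)
    show IsUnit M.det ↔ IsUnit (Φ M).det
    rw [← RingHom.map_det]
    exact isUnit_zmod_pow_iff_cast hp he M.det
  rw [Nat.card_congr e1, card_preimage_hom _ hsurj]
  congr 1
  · -- kernel count
    have e2 : (Φ.toAddMonoidHom ⁻¹' ({0} : Set (Matrix (Fin r) (Fin r) (ZMod p))))
        ≃ (Fin r → Fin r → {x : ZMod (p ^ e) // c x = 0}) :=
      { toFun := fun M i j => ⟨M.1 i j, by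
          have hM : Φ M.1 = 0 := M.2
          show c (M.1 i j) = 0
          calc c (M.1 i j) = Φ M.1 i j := rfl
            _ = (0 : Matrix (Fin r) (Fin r) (ZMod p)) i j := by rw [hM]
            _ = 0 := rfl⟩
        invFun := fun f => ⟨Matrix.of (fun i j => (f i j).1), by
          show Φ _ = 0
          ext i j
          exact (f i j).2⟩
        left_inv := fun M => Subtype.ext rfl
        right_inv := fun f => rfl }
    rw [Nat.card_congr e2, Nat.card_pi]
    have hk : Nat.card {x : ZMod (p ^ e) // c x = 0} = p ^ (e - 1) := card_ker_cast hp he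
    have hrow : ∀ i : Fin r, Nat.card (Fin r → {x : ZMod (p ^ e) // c x = 0}) =
        (p ^ (e - 1)) ^ r := by
      intro i
      rw [Nat.card_pi, Finset.prod_congr rfl (fun j _ => hk), Finset.prod_const,
        Finset.card_univ, Fintype.card_fin]
    rw [Finset.prod_congr rfl (fun i _ => hrow i), Finset.prod_const, Finset.card_univ,
      Fintype.card_fin, ← pow_mul]
  · -- GL count
    have e3 : ↥S ≃ GL (Fin r) (ZMod p) :=
      (Equiv.subtypeEquiv (Equiv.refl _)
        (fun N => (Matrix.isUnit_iff_isUnit_det N).symm)).trans isUnitEquivUnits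
    rw [Nat.card_congr e3, Matrix.card_GL_field]
    simp [ZMod.card]

end GLCount


section BaseCase

/-- Additive endomorphisms of a `ZMod n`-module coincide with linear endomorphisms. -/
def homLinEquiv (n : ℕ) (M : Type*) [AddCommGroup M] [Module (ZMod n) M] :
    (M →+ M) ≃ (M →ₗ[ZMod n] M) where
  toFun f := f.toZModLinearMap n
  invFun g := g.toAddMonoidHom
  left_inv f := by ext x; rfl
  right_inv g := by ext x; rfl

lemma card_aut_base {p : ℕ} (hp : p.Prime) {e : ℕ} (he : 0 < e) (r : ℕ) :
    Nat.card (AddAut (Fin r → ZMod (p ^ e))) =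
      (p ^ (e - 1)) ^ (r * r) * ∏ i : Fin r, (p ^ r - p ^ (i : ℕ)) := by
  haveI : NeZero (p ^ e) := ⟨pow_ne_zero _ hp.pos.ne'⟩
  set R := ZMod (p ^ e) with hR
  have key : ∀ f : (Fin r → R) →+ (Fin r → R), Function.Bijective f ↔
      IsUnit (((homLinEquiv (p ^ e) (Fin r → R)).trans
        (LinearMap.toMatrixAlgEquiv' :
          ((Fin r → R) →ₗ[R] (Fin r → R)) ≃ₐ[R] Matrix (Fin r) (Fin r) R).toEquiv) f).det := by
    intro f
    have h1 : Function.Bijective f ↔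
        IsUnit (homLinEquiv (p ^ e) (Fin r → R) f : Module.End R (Fin r → R)) := by
      rw [Module.End.isUnit_iff]
      exact Iff.rfl
    have h2 : IsUnit (homLinEquiv (p ^ e) (Fin r → R) f : Module.End R (Fin r → R)) ↔
        IsUnit (LinearMap.toMatrixAlgEquiv' (homLinEquiv (p ^ e) (Fin r → R) f)) := by
      constructor
      · intro h
        exact h.map (LinearMap.toMatrixAlgEquiv' :
          ((Fin r → R) →ₗ[R] (Fin r → R)) ≃ₐ[R] Matrix (Fin r) (Fin r) R)
      · intro h
        have h3 := h.map (LinearMap.toMatrixAlgEquiv' :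
          ((Fin r → R) →ₗ[R] (Fin r → R)) ≃ₐ[R] Matrix (Fin r) (Fin r) R).symm
        rwa [AlgEquiv.symm_apply_apply] at h3
    rw [h1, h2, ← Matrix.isUnit_iff_isUnit_det]
    exact Iff.rfl
  have EE : AddAut (Fin r → R) ≃ {A : Matrix (Fin r) (Fin r) R // IsUnit A.det} :=
    (autEquivBijEnd (Fin r → R)).trans (Equiv.subtypeEquiv _ key)
  rw [Nat.card_congr EE]
  exact card_unit_det hp he r

end BaseCase



section Transport

/-- Transport of additive automorphisms along an additive equivalence. -/
def addAutCongr {X Y : Type*} [AddGroup X] [AddGroup Y] (e : X ≃+ Y) :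
    AddAut X ≃ AddAut Y where
  toFun f := (e.symm.trans f).trans e
  invFun g := (e.trans g).trans e.symm
  left_inv f := by ext x; simp
  right_inv g := by ext x; simp

/-- The additive equivalence splitting off the first factor of a finite product. -/
def piSuccAddEquiv {k : ℕ} (M : Fin (k + 1) → Type*) [∀ i, AddCommMonoid (M i)] :
    (∀ i, M i) ≃+ M 0 × ∀ i : Fin k, M i.succ where
  toFun f := (f 0, fun i => f i.succ)
  invFun x := Fin.cons x.1 x.2
  left_inv f := by
    funext i
    refine Fin.cases ?_ ?_ i <;> simp
  right_inv x := by simp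
  map_add' f g := rfl

lemma zmod_pow_smul_eq_zero {p m n : ℕ} (hp : 0 < p) (hmn : m ≤ n) (x : ZMod (p ^ m)) :
    p ^ n • x = 0 := by
  haveI : NeZero (p ^ m) := ⟨pow_ne_zero _ hp.ne'⟩
  rw [smul_zero_iff_dvd]
  exact dvd_mul_of_dvd_left (pow_dvd_pow p hmn) _

lemma zmod_div_of_tors {p : ℕ} (hp : 0 < p) {m : ℕ} (hm : 0 < m) (x : ZMod (p ^ m))
    (hx : p ^ (m - 1) • x = 0) : ∃ y : ZMod (p ^ m), x = p • y := by
  haveI : NeZero (p ^ m) := ⟨pow_ne_zero _ hp.ne'⟩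
  rw [smul_zero_iff_dvd] at hx
  have hsplit : p ^ m = p ^ (m - 1) * p := by
    rw [← pow_succ, Nat.sub_add_cancel hm]
  have hdvd : p ∣ x.val := by
    have h2 : p ^ (m - 1) * p ∣ p ^ (m - 1) * x.val := by
      rw [← hsplit]; exact hx
    exact (Nat.mul_dvd_mul_iff_left (pow_pos hp _)).mp h2
  refine ⟨((x.val / p : ℕ) : ZMod (p ^ m)), ?_⟩
  have : p • ((x.val / p : ℕ) : ZMod (p ^ m)) = ((p * (x.val / p) : ℕ) : ZMod (p ^ m)) := by
    push_cast
    rw [nsmul_eq_mul]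
  rw [this, Nat.mul_div_cancel' hdvd]
  exact (ZMod.natCast_rightInverse x).symm

end Transport

section RatBase

lemma prod_reindex_icc {p : ℕ} (hp : p.Prime) (r : ℕ) :
    (∏ i : Fin r, (1 - ((p : ℚ))⁻¹ ^ (r - (i : ℕ)))) =
      ∏ s ∈ Finset.Icc 1 r, (1 - ((p : ℚ))⁻¹ ^ s) := by
  rw [Fin.prod_univ_eq_prod_range (fun i => (1 - ((p : ℚ))⁻¹ ^ (r - i))) r]
  rw [show Finset.Icc 1 r = Finset.Ico 1 (r + 1) by rw [Finset.Ico_add_one_right_eq_Icc],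
    Finset.prod_Ico_eq_prod_range]
  simp only [Nat.add_sub_cancel]
  rw [← Finset.prod_range_reflect (fun j => (1 - ((p : ℚ))⁻¹ ^ (r - j))) r]
  apply Finset.prod_congr rfl
  intro j hj
  rw [Finset.mem_range] at hj
  congr 2
  omega

lemma rat_base {p : ℕ} (hp : p.Prime) {e : ℕ} (he : 0 < e) (r : ℕ) :
    (((p ^ (e - 1)) ^ (r * r) * ∏ i : Fin r, (p ^ r - p ^ (i : ℕ)) : ℕ) : ℚ) =
      (p : ℚ) ^ (e * r * r) * ∏ s ∈ Finset.Icc 1 r, (1 - ((p : ℚ))⁻¹ ^ s) := by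
  have hpQ : (p : ℚ) ≠ 0 := by
    exact_mod_cast hp.pos.ne'
  have hcast : ∀ i : Fin r, ((p ^ r - p ^ (i : ℕ) : ℕ) : ℚ) =
      (p : ℚ) ^ r - (p : ℚ) ^ (i : ℕ) := by
    intro i
    rw [Nat.cast_sub (Nat.pow_le_pow_right hp.pos (le_of_lt i.2))]
    push_cast
    ring
  have hfac : ∀ i : Fin r, (p : ℚ) ^ r - (p : ℚ) ^ (i : ℕ) =
      (p : ℚ) ^ r * (1 - ((p : ℚ))⁻¹ ^ (r - (i : ℕ))) := by
    intro i
    rw [mul_sub, mul_one]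
    congr 1
    rw [inv_pow, ← div_eq_mul_inv, eq_div_iff (pow_ne_zero _ hpQ), ← pow_add]
    congr 1
    omega
  push_cast
  rw [Finset.prod_congr rfl (fun i _ => by rw [hcast i, hfac i])]
  rw [Finset.prod_mul_distrib, Finset.prod_const, Finset.card_univ, Fintype.card_fin,
    prod_reindex_icc hp r, ← pow_mul, ← pow_mul, ← mul_assoc, ← pow_add]
  congr 2
  have h1 : e - 1 + 1 = e := Nat.sub_add_cancel he
  calc (e - 1) * (r * r) + r * r = (e - 1 + 1) * (r * r) := by ring
    _ = e * r * r := by rw [h1, mul_assoc]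

end RatBase


/-- For a prime `p` and `G = ∏_{i=1}^k (ℤ/p^{e_i}ℤ)^{r_i}` with `e_1 > e_2 > ⋯ > e_k > 0`,
`|Aut G| = (∏_i ∏_{s=1}^{r_i} (1 - p^{-s})) ⬝ ∏_{i,j} p^{min(e_i,e_j) r_i r_j}`. -/
theorem stmt5 (p : ℕ) (hp : p.Prime) (k : ℕ) (e r : Fin k → ℕ)
    (he : StrictAnti e) (hepos : ∀ i, 0 < e i) :
    (Nat.card (AddAut ((i : Fin k) → Fin (r i) → ZMod (p ^ e i))) : ℚ) =
      (∏ i : Fin k, ∏ s ∈ Finset.Icc 1 (r i), (1 - ((p : ℚ))⁻¹ ^ s)) *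
        ∏ i : Fin k, ∏ j : Fin k, (p : ℚ) ^ (min (e i) (e j) * r i * r j) := by
  induction k with
  | zero =>
    haveI : Subsingleton ((i : Fin 0) → Fin (r i) → ZMod (p ^ e i)) :=
      ⟨fun a b => funext fun i => i.elim0⟩
    haveI : Subsingleton (AddAut ((i : Fin 0) → Fin (r i) → ZMod (p ^ e i))) :=
      ⟨fun a b => AddEquiv.ext fun x => Subsingleton.elim _ _⟩
    rw [Nat.card_of_subsingleton (AddEquiv.refl _)]
    simp
  | succ k ih =>
    haveI hNZ : ∀ m : ℕ, NeZero (p ^ m) := fun m => ⟨pow_ne_zero _ hp.pos.ne'⟩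
    have heq : Nat.card (AddAut ((i : Fin (k+1)) → Fin (r i) → ZMod (p ^ e i))) =
        Nat.card (AddAut ((Fin (r 0) → ZMod (p ^ e 0)) ×
          ((i : Fin k) → Fin (r i.succ) → ZMod (p ^ e i.succ)))) :=
      Nat.card_congr (addAutCongr (piSuccAddEquiv (fun i => Fin (r i) → ZMod (p ^ e i))))
    have hlt : ∀ i : Fin k, e i.succ ≤ e 0 - 1 := by
      intro i
      have h1 : e i.succ < e 0 := he (Fin.succ_pos i)
      omega
    have hH0 : ∀ h : ((i : Fin k) → Fin (r i.succ) → ZMod (p ^ e i.succ)),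
        p ^ (e 0 - 1) • h = 0 := by
      intro h
      funext i t
      show p ^ (e 0 - 1) • (h i t) = 0
      exact zmod_pow_smul_eq_zero hp.pos (hlt i) _
    have hA1 : ∀ a : (Fin (r 0) → ZMod (p ^ e 0)), p ^ (e 0 - 1) • a = 0 →
        ∃ b, a = p • b := by
      intro a ha
      have hcomp : ∀ t, ∃ y, a t = p • y := by
        intro t
        apply zmod_div_of_tors hp.pos (hepos 0)
        exact congrFun ha t
      choose b hb using hcomp
      exact ⟨b, funext fun t => hb t⟩
    have hE : ∀ a : (Fin (r 0) → ZMod (p ^ e 0)), p ^ (e 0) • a = 0 := by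
      intro a
      funext t
      show p ^ (e 0) • (a t) = 0
      exact zmod_pow_smul_eq_zero hp.pos (le_refl _) _
    have hcard := card_aut_prod (Fin (r 0) → ZMod (p ^ e 0))
      ((i : Fin k) → Fin (r i.succ) → ZMod (p ^ e i.succ)) hH0 hA1 hE
    have hAutA := card_aut_base hp (hepos 0) (r 0)
    have hHomHA : Nat.card (((i : Fin k) → Fin (r i.succ) → ZMod (p ^ e i.succ)) →+
        (Fin (r 0) → ZMod (p ^ e 0))) =
        ∏ i : Fin k, p ^ (min (e i.succ) (e 0) * r i.succ * r 0) := by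
      rw [Nat.card_congr (homPiLeftEquiv _ _), Nat.card_pi]
      exact Finset.prod_congr rfl fun i _ => card_hom_block hp.pos _ _ _ _
    have hHomAH : Nat.card ((Fin (r 0) → ZMod (p ^ e 0)) →+
        ((i : Fin k) → Fin (r i.succ) → ZMod (p ^ e i.succ))) =
        ∏ j : Fin k, p ^ (min (e 0) (e j.succ) * r 0 * r j.succ) := by
      rw [Nat.card_congr (homPiRightEquiv _ _), Nat.card_pi]
      exact Finset.prod_congr rfl fun j _ => card_hom_block hp.pos _ _ _ _
    have hAutH : (Nat.card (AddAut ((i : Fin k) → Fin (r i.succ) → ZMod (p ^ e i.succ))) : ℚ) =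
        (∏ i : Fin k, ∏ s ∈ Finset.Icc 1 (r i.succ), (1 - ((p : ℚ))⁻¹ ^ s)) *
          ∏ i : Fin k, ∏ j : Fin k,
            (p : ℚ) ^ (min (e i.succ) (e j.succ) * r i.succ * r j.succ) :=
      ih (fun i => e i.succ) (fun i => r i.succ)
        (fun i j hij => he (Fin.succ_lt_succ_iff.mpr hij)) (fun i => hepos i.succ)
    have c1 : (Nat.card (AddAut (Fin (r 0) → ZMod (p ^ e 0))) : ℚ) =
        (p : ℚ) ^ (e 0 * r 0 * r 0) * ∏ s ∈ Finset.Icc 1 (r 0), (1 - ((p : ℚ))⁻¹ ^ s) := by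
      rw [hAutA]
      exact rat_base hp (hepos 0) (r 0)
    have c2 : (Nat.card ((((i : Fin k) → Fin (r i.succ) → ZMod (p ^ e i.succ))) →+
        (Fin (r 0) → ZMod (p ^ e 0))) : ℚ) =
        ∏ i : Fin k, (p : ℚ) ^ (min (e i.succ) (e 0) * r i.succ * r 0) := by
      rw [hHomHA]
      push_cast
      rfl
    have c3 : (Nat.card ((Fin (r 0) → ZMod (p ^ e 0)) →+
        ((i : Fin k) → Fin (r i.succ) → ZMod (p ^ e i.succ))) : ℚ) =
        ∏ j : Fin k, (p : ℚ) ^ (min (e 0) (e j.succ) * r 0 * r j.succ) := by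
      rw [hHomAH]
      push_cast
      rfl
    rw [heq, hcard, Nat.cast_mul, Nat.cast_mul, Nat.cast_mul, c1, c2, c3, hAutH]
    rw [Fin.prod_univ_succ (fun i => ∏ s ∈ Finset.Icc 1 (r i), (1 - ((p : ℚ))⁻¹ ^ s))]
    rw [Fin.prod_univ_succ
      (fun i => ∏ j : Fin (k+1), (p : ℚ) ^ (min (e i) (e j) * r i * r j))]
    rw [Fin.prod_univ_succ (fun j => (p : ℚ) ^ (min (e 0) (e j) * r 0 * r j))]
    have hsplit2 : (∏ i : Fin k,
        ∏ j : Fin (k+1), (p : ℚ) ^ (min (e i.succ) (e j) * r i.succ * r j)) =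
        (∏ i : Fin k, (p : ℚ) ^ (min (e i.succ) (e 0) * r i.succ * r 0)) *
          ∏ i : Fin k, ∏ j : Fin k,
            (p : ℚ) ^ (min (e i.succ) (e j.succ) * r i.succ * r j.succ) := by
      rw [← Finset.prod_mul_distrib]
      exact Finset.prod_congr rfl fun i _ => Fin.prod_univ_succ _
    rw [hsplit2, min_self]
    ring
end

section
/- For a prime $p$ and a positive integer $n$, $\sum_{|G|=p^n} |\mathrm{Aut}(G)|^{-1} = \sum_{\lambda \vdash n} p^{-\sum_i (\lambda'_i)^2} \prod_{i}\prod_{s=1}^{\lambda'_i-\lambda'_{i+1}} (1-p^{-s})^{-1}$, where the left sum is over isomorphism classes of abelian groups $G$ of order $p^n$. -/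
/-- The finite abelian `p`-group `G_λ = ∏_i ℤ/p^{λ_i}ℤ` associated to a partition `λ`;
as `λ` ranges over the partitions of `n`, `G_λ` ranges over the isomorphism classes of abelian
groups of order `p^n` exactly once. -/
def Glam (p : ℕ) {n : ℕ} (lam : Nat.Partition n) : Type :=
  (i : Fin (lam.parts.sort (· ≤ ·)).length) → ZMod (p ^ (lam.parts.sort (· ≤ ·)).get i)

instance (p : ℕ) {n : ℕ} (lam : Nat.Partition n) : AddCommGroup (Glam p lam) :=
  Pi.addCommGroup

/-- `conj λ i` is the `i`-th part `λ'_i` of the conjugate partition of `λ`. -/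
def conj {n : ℕ} (lam : Nat.Partition n) (i : ℕ) : ℕ :=
  (lam.parts.filter (i ≤ ·)).card

open Finset Function

namespace S17

/-- Core counting: multiples of `d` in `ZMod (d*k)`. -/
def multEquiv (d k : ℕ) (hd : 0 < d) (hk : 0 < k) :
    {y : ZMod (d * k) // d ∣ y.val} ≃ Fin k := by
  haveI : NeZero (d * k) := ⟨(Nat.mul_pos hd hk).ne'⟩
  exact
  { toFun := fun y => ⟨y.1.val / d, by
      have h := ZMod.val_lt y.1
      exact Nat.div_lt_of_lt_mul (by omega)⟩
    invFun := fun j => ⟨((d * (j : ℕ) : ℕ) : ZMod (d * k)), by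
      rw [ZMod.val_natCast_of_lt (by have := j.2; exact (Nat.mul_lt_mul_left hd).2 j.2)]
      exact Dvd.intro _ rfl⟩
    left_inv := fun y => by
      apply Subtype.ext
      show ((d * ((y : ZMod (d*k)).val / d) : ℕ) : ZMod (d * k)) = y
      rw [Nat.mul_div_cancel' y.2]
      exact ZMod.natCast_rightInverse y.1
    right_inv := fun j => by
      apply Fin.ext
      simp only []
      rw [ZMod.val_natCast_of_lt (by exact (Nat.mul_lt_mul_left hd).2 j.2)]
      exact Nat.mul_div_cancel_left _ hd }

lemma card_dvd_val (p b e : ℕ) (hp : 0 < p) (he : e ≤ b) :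
    Nat.card {y : ZMod (p ^ b) // p ^ e ∣ y.val} = p ^ (b - e) := by
  have h : p ^ b = p ^ e * p ^ (b - e) := by rw [← pow_add, Nat.add_sub_cancel' he]
  rw [h]
  rw [Nat.card_congr (multEquiv _ _ (pow_pos hp e) (pow_pos hp (b - e)))]
  simp

lemma pow_nsmul_eq_zero_iff (p b c : ℕ) (hp : 0 < p) (y : ZMod (p ^ b)) :
    p ^ c • y = 0 ↔ p ^ (b - c) ∣ y.val := by
  haveI : NeZero (p ^ b) := ⟨(pow_pos hp b).ne'⟩
  have h1 : p ^ c • y = ((p ^ c * y.val : ℕ) : ZMod (p ^ b)) := by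
    rw [Nat.cast_mul, ZMod.natCast_rightInverse y, nsmul_eq_mul]
  rw [h1, ZMod.natCast_eq_zero_iff]
  rcases le_total b c with h | h
  · simp only [Nat.sub_eq_zero_of_le h, pow_zero, one_dvd, iff_true]
    exact dvd_mul_of_dvd_left (pow_dvd_pow p h) _
  · constructor
    · intro hd
      have : p ^ c * p ^ (b - c) ∣ p ^ c * y.val := by
        rwa [← pow_add, Nat.add_sub_cancel' h]
      exact (mul_dvd_mul_iff_left (pow_pos hp c).ne').mp this
    · intro hd
      calc p ^ b = p ^ c * p ^ (b - c) := by rw [← pow_add, Nat.add_sub_cancel' h]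
      _ ∣ p ^ c * y.val := mul_dvd_mul_left _ hd

lemma cast_eq_zero_iff' (p b : ℕ) (hp : 0 < p) (hb : 0 < b) (y : ZMod (p ^ b)) :
    (ZMod.castHom (dvd_pow_self p hb.ne') (ZMod p)) y = 0 ↔ p ∣ y.val := by
  haveI : NeZero (p ^ b) := ⟨(pow_pos hp b).ne'⟩
  rw [ZMod.castHom_apply, ← ZMod.natCast_val, ZMod.natCast_eq_zero_iff]

lemma combined_iff (p b c : ℕ) (hp : 0 < p) (hb : 0 < b) (y : ZMod (p ^ b)) :
    (p ^ c • y = 0 ∧ (ZMod.castHom (dvd_pow_self p hb.ne') (ZMod p)) y = 0) ↔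
      p ^ (max (b - c) 1) ∣ y.val := by
  rw [pow_nsmul_eq_zero_iff p b c hp, cast_eq_zero_iff' p b hp hb]
  constructor
  · rintro ⟨h1, h2⟩
    rcases Nat.le_total (b - c) 1 with h | h
    · rw [max_eq_right h]
      rwa [pow_one]
    · rw [max_eq_left (le_trans (by norm_num) h)]
      exact h1
  · intro h
    constructor
    · exact dvd_trans (pow_dvd_pow p (le_max_left _ _)) h
    · exact dvd_trans (dvd_trans (dvd_refl p) (by
        have : p = p ^ 1 := (pow_one p).symm
        calc p ∣ p ^ 1 := by rw [pow_one]
        _ ∣ p ^ (max (b - c) 1) := pow_dvd_pow p (le_max_right _ _))) h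

lemma card_combined (p b c : ℕ) (hp : 0 < p) (hb : 0 < b) :
    Nat.card {y : ZMod (p ^ b) //
        p ^ c • y = 0 ∧ (ZMod.castHom (dvd_pow_self p hb.ne') (ZMod p)) y = 0} =
      p ^ (b - max (b - c) 1) := by
  rw [Nat.card_congr (Equiv.subtypeEquivRight (fun y => combined_iff p b c hp hb y))]
  exact card_dvd_val p b _ hp (max_le (Nat.sub_le b c) hb)


variable {p ℓ : ℕ} {a : Fin ℓ → ℕ}

/-- scalar mult by val is additive when killed -/
lemma smul_mod {n : ℕ} {A : Type*} [AddCommMonoid A] {x : A} (h : n • x = 0) (m : ℕ) :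
    (m % n) • x = m • x := by
  conv_rhs => rw [← Nat.div_add_mod m n]
  rw [add_nsmul, mul_comm n (m / n), mul_nsmul', h, smul_zero, zero_add]

lemma val_add_smul {n : ℕ} [NeZero n] {A : Type*} [AddCommMonoid A] {x : A} (h : n • x = 0)
    (u v : ZMod n) : (u + v).val • x = u.val • x + v.val • x := by
  rw [ZMod.val_add, smul_mod h, add_nsmul]

section defs
variable (p a)

def delta (j : Fin ℓ) : (i : Fin ℓ) → ZMod (p ^ a i) := Pi.single j 1

def red (ha : ∀ i, 0 < a i) : ((i : Fin ℓ) → ZMod (p ^ a i)) →+ (Fin ℓ → ZMod p) where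
  toFun x i := ZMod.castHom (dvd_pow_self p (ha i).ne') (ZMod p) (x i)
  map_zero' := by funext i; exact map_zero (ZMod.castHom (dvd_pow_self p (ha i).ne') (ZMod p))
  map_add' x y := by funext i; exact map_add (ZMod.castHom (dvd_pow_self p (ha i).ne') (ZMod p)) _ _

def Psi (ha : ∀ i, 0 < a i) :
    (((i : Fin ℓ) → ZMod (p ^ a i)) →+ ((i : Fin ℓ) → ZMod (p ^ a i))) →+
      Matrix (Fin ℓ) (Fin ℓ) (ZMod p) where
  toFun φ := Matrix.of fun i j => red p a ha (φ (delta p a j)) i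
  map_zero' := by ext i j; simp
  map_add' φ ψ := by ext i j; simp [Matrix.add_apply]

def mkHom (hp : 0 < p) (x : Fin ℓ → ((i : Fin ℓ) → ZMod (p ^ a i)))
    (hx : ∀ j, p ^ a j • x j = 0) :
    ((i : Fin ℓ) → ZMod (p ^ a i)) →+ ((i : Fin ℓ) → ZMod (p ^ a i)) where
  toFun v := ∑ j, (v j).val • x j
  map_zero' := by
    haveI : ∀ i, NeZero (p ^ a i) := fun i => ⟨(pow_pos hp _).ne'⟩
    simp
  map_add' u v := by
    show (∑ j, ((u + v) j).val • x j) = (∑ j, (u j).val • x j) + (∑ j, (v j).val • x j)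
    rw [← Finset.sum_add_distrib]
    refine Finset.sum_congr rfl fun j _ => ?_
    haveI : NeZero (p ^ a j) := ⟨(pow_pos hp _).ne'⟩
    exact val_add_smul (hx j) (u j) (v j)

end defs



variable {p ℓ : ℕ} {a : Fin ℓ → ℕ}

lemma single_eq_val_smul_delta (hp : 0 < p) (j : Fin ℓ) (y : ZMod (p ^ a j)) :
    Pi.single j y = y.val • delta p a j := by
  haveI : NeZero (p ^ a j) := ⟨(pow_pos hp _).ne'⟩
  rw [delta, ← Pi.single_smul]
  congr 1
  rw [nsmul_eq_mul, mul_one, ZMod.natCast_rightInverse y]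

lemma hom_apply_eq (hp : 0 < p)
    (φ : ((i : Fin ℓ) → ZMod (p ^ a i)) →+ ((i : Fin ℓ) → ZMod (p ^ a i)))
    (v : (i : Fin ℓ) → ZMod (p ^ a i)) :
    φ v = ∑ j, (v j).val • φ (delta p a j) := by
  conv_lhs => rw [← Finset.univ_sum_single v]
  rw [map_sum]
  refine Finset.sum_congr rfl fun j _ => ?_
  rw [single_eq_val_smul_delta hp, map_nsmul]

lemma red_natCast_val (hp : 0 < p) (ha : ∀ i, 0 < a i) (v : (i : Fin ℓ) → ZMod (p ^ a i))
    (j : Fin ℓ) : ((v j).val : ZMod p) = red p a ha v j := by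
  haveI : NeZero (p ^ a j) := ⟨(pow_pos hp _).ne'⟩
  show _ = ZMod.castHom (dvd_pow_self p (ha j).ne') (ZMod p) (v j)
  rw [ZMod.castHom_apply, ZMod.natCast_val]

lemma red_hom_apply (hp : 0 < p) (ha : ∀ i, 0 < a i)
    (φ : ((i : Fin ℓ) → ZMod (p ^ a i)) →+ ((i : Fin ℓ) → ZMod (p ^ a i)))
    (v : (i : Fin ℓ) → ZMod (p ^ a i)) (i : Fin ℓ) :
    red p a ha (φ v) i = ∑ j, Psi p a ha φ i j * red p a ha v j := by
  rw [hom_apply_eq hp φ v, map_sum]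
  rw [Finset.sum_apply]
  refine Finset.sum_congr rfl fun j _ => ?_
  rw [map_nsmul, Pi.smul_apply, nsmul_eq_mul, ← red_natCast_val hp ha v j, mul_comm]
  rfl

lemma red_hom_apply' (hp : 0 < p) (ha : ∀ i, 0 < a i)
    (φ : ((i : Fin ℓ) → ZMod (p ^ a i)) →+ ((i : Fin ℓ) → ZMod (p ^ a i)))
    (v : (i : Fin ℓ) → ZMod (p ^ a i)) :
    red p a ha (φ v) = (Psi p a ha φ).mulVec (red p a ha v) := by
  funext i
  rw [red_hom_apply hp ha φ v i]
  rfl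

lemma Psi_comp (hp : 0 < p) (ha : ∀ i, 0 < a i)
    (φ ψ : ((i : Fin ℓ) → ZMod (p ^ a i)) →+ ((i : Fin ℓ) → ZMod (p ^ a i))) :
    Psi p a ha (φ.comp ψ) = Psi p a ha φ * Psi p a ha ψ := by
  ext i j
  rw [Matrix.mul_apply]
  show red p a ha (φ (ψ (delta p a j))) i = _
  rw [red_hom_apply hp ha φ _ i]
  rfl

lemma Psi_id (ha : ∀ i, 0 < a i) :
    Psi p a ha (AddMonoidHom.id _) = 1 := by
  ext i j
  show red p a ha (delta p a j) i = (1 : Matrix (Fin ℓ) (Fin ℓ) (ZMod p)) i j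
  rw [Matrix.one_apply]
  rcases eq_or_ne i j with rfl | h
  · rw [if_pos rfl]
    simp only [red, AddMonoidHom.coe_mk, ZeroHom.coe_mk, delta, Pi.single_eq_same]
    exact map_one _
  · rw [if_neg h]
    simp only [red, AddMonoidHom.coe_mk, ZeroHom.coe_mk, delta]
    rw [Pi.single_eq_of_ne h]
    exact map_zero _

lemma mkHom_delta (hp : 1 < p) (ha : ∀ i, 0 < a i)
    (x : Fin ℓ → ((i : Fin ℓ) → ZMod (p ^ a i))) (hx : ∀ j, p ^ a j • x j = 0) (j : Fin ℓ) :
    mkHom p a (by omega) x hx (delta p a j) = x j := by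
  show (∑ k, ((delta p a j) k).val • x k) = x j
  rw [Finset.sum_eq_single j]
  · haveI : NeZero (p ^ a j) := ⟨(pow_pos (by omega : 0 < p) _).ne'⟩
    rw [delta, Pi.single_eq_same, ZMod.val_one_eq_one_mod]
    rw [Nat.mod_eq_of_lt (Nat.one_lt_pow (ha j).ne' hp), one_smul]
  · intro k _ hk
    haveI : NeZero (p ^ a k) := ⟨(pow_pos (by omega : 0 < p) _).ne'⟩
    rw [delta, Pi.single_eq_of_ne hk, ZMod.val_zero, zero_smul]
  · intro h
    exact absurd (Finset.mem_univ j) h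

lemma Psi_mkHom (hp : 1 < p) (ha : ∀ i, 0 < a i)
    (x : Fin ℓ → ((i : Fin ℓ) → ZMod (p ^ a i))) (hx : ∀ j, p ^ a j • x j = 0) (i j : Fin ℓ) :
    Psi p a ha (mkHom p a (by omega) x hx) i j = red p a ha (x j) i := by
  show red p a ha (mkHom p a _ x hx (delta p a j)) i = _
  rw [mkHom_delta hp ha x hx j]




variable {p ℓ : ℕ} {a : Fin ℓ → ℕ}

lemma smul_hom_delta (hp : 0 < p)
    (φ : ((i : Fin ℓ) → ZMod (p ^ a i)) →+ ((i : Fin ℓ) → ZMod (p ^ a i))) (j : Fin ℓ) :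
    p ^ a j • φ (delta p a j) = 0 := by
  rw [← map_nsmul, ← map_zero φ]
  congr 1
  rw [delta, ← Pi.single_smul]
  rw [nsmul_eq_mul, mul_one]
  rw [ZMod.natCast_self, Pi.single_zero]

lemma psi_range_iff (hp : 1 < p) (ha : ∀ i, 0 < a i) (M : Matrix (Fin ℓ) (Fin ℓ) (ZMod p)) :
    (∃ φ, Psi p a ha φ = M) ↔ M.BlockTriangular a := by
  have hp0 : 0 < p := by omega
  constructor
  · rintro ⟨φ, rfl⟩
    intro i j hij
    have h1 : p ^ a j • (φ (delta p a j) i) = 0 := by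
      have h := smul_hom_delta hp0 φ j
      calc p ^ a j • (φ (delta p a j) i) = (p ^ a j • φ (delta p a j)) i := rfl
      _ = 0 := by rw [h]; rfl
    have h2 : p ^ (a i - a j) ∣ (φ (delta p a j) i).val :=
      (pow_nsmul_eq_zero_iff p (a i) (a j) hp0 _).mp h1
    show ZMod.castHom (dvd_pow_self p (ha i).ne') (ZMod p) (φ (delta p a j) i) = 0
    rw [cast_eq_zero_iff' p (a i) hp0 (ha i)]
    refine dvd_trans ?_ h2
    calc p = p ^ 1 := (pow_one p).symm
    _ ∣ p ^ (a i - a j) := pow_dvd_pow p (by omega)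
  · intro hM
    set x : Fin ℓ → ((i : Fin ℓ) → ZMod (p ^ a i)) := fun j i =>
      if a i ≤ a j then ((M i j).val : ZMod (p ^ a i)) else 0 with hxdef
    have hx : ∀ j, p ^ a j • x j = 0 := by
      intro j
      funext i
      show p ^ a j • (x j i) = 0
      rw [hxdef]
      simp only []
      split_ifs with h
      · rw [nsmul_eq_mul, ← Nat.cast_mul, ZMod.natCast_eq_zero_iff]
        exact dvd_mul_of_dvd_left (pow_dvd_pow p h) _
      · rw [smul_zero]
    refine ⟨mkHom p a hp0 x hx, ?_⟩
    ext i j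
    rw [show (Psi p a ha (mkHom p a hp0 x hx)) i j = red p a ha (x j) i from
      Psi_mkHom hp ha x hx i j]
    show ZMod.castHom (dvd_pow_self p (ha i).ne') (ZMod p) (x j i) = M i j
    rw [hxdef]
    simp only []
    split_ifs with h
    · haveI : NeZero p := ⟨hp0.ne'⟩
      rw [map_natCast, ZMod.natCast_rightInverse (M i j)]
    · rw [map_zero]
      exact (hM (by omega)).symm

lemma red_surjective (hp : 1 < p) (ha : ∀ i, 0 < a i) :
    Surjective (red p a ha) := by
  haveI : NeZero p := ⟨by omega⟩
  intro y
  refine ⟨fun i => ((y i).val : ZMod (p ^ a i)), ?_⟩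
  funext i
  show ZMod.castHom (dvd_pow_self p (ha i).ne') (ZMod p) (((y i).val : ZMod (p ^ a i))) = y i
  rw [map_natCast, ZMod.natCast_rightInverse (y i)]

lemma exists_of_red_zero (hp : 1 < p) (ha : ∀ i, 0 < a i)
    (w : (i : Fin ℓ) → ZMod (p ^ a i)) (hw : red p a ha w = 0) :
    ∃ z, w = p • z := by
  have hp0 : 0 < p := by omega
  refine ⟨fun i => (((w i).val / p : ℕ) : ZMod (p ^ a i)), ?_⟩
  funext i
  haveI : NeZero (p ^ a i) := ⟨(pow_pos hp0 _).ne'⟩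
  have h1 : p ∣ (w i).val := by
    rw [← cast_eq_zero_iff' p (a i) hp0 (ha i)]
    calc ZMod.castHom (dvd_pow_self p (ha i).ne') (ZMod p) (w i) = red p a ha w i := rfl
    _ = 0 := by rw [hw]; rfl
  have h2 : p • ((((w i).val / p : ℕ) : ZMod (p ^ a i))) = w i := by
    rw [nsmul_eq_mul, ← Nat.cast_mul, Nat.mul_div_cancel' h1]
    exact ZMod.natCast_rightInverse (w i)
  exact h2.symm


lemma isUnit_psi_of_bijective (hp : 1 < p) (ha : ∀ i, 0 < a i)
    (φ : ((i : Fin ℓ) → ZMod (p ^ a i)) →+ ((i : Fin ℓ) → ZMod (p ^ a i)))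
    (h : Bijective φ) : IsUnit (Psi p a ha φ) := by
  have hp0 : 0 < p := by omega
  let e := AddEquiv.ofBijective φ h
  let ψ : ((i : Fin ℓ) → ZMod (p ^ a i)) →+ ((i : Fin ℓ) → ZMod (p ^ a i)) :=
    e.symm.toAddMonoidHom
  have h1 : φ.comp ψ = AddMonoidHom.id _ := AddMonoidHom.ext fun v => e.apply_symm_apply v
  have h2 : ψ.comp φ = AddMonoidHom.id _ := AddMonoidHom.ext fun v => e.symm_apply_apply v
  refine ⟨⟨Psi p a ha φ, Psi p a ha ψ, ?_, ?_⟩, rfl⟩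
  · rw [← Psi_comp hp0 ha, h1, Psi_id]
  · rw [← Psi_comp hp0 ha, h2, Psi_id]

lemma surjective_of_isUnit_psi (hp : 1 < p) (ha : ∀ i, 0 < a i)
    (φ : ((i : Fin ℓ) → ZMod (p ^ a i)) →+ ((i : Fin ℓ) → ZMod (p ^ a i)))
    (h : IsUnit (Psi p a ha φ)) : Surjective φ := by
  have hp0 : 0 < p := by omega
  obtain ⟨u, hu⟩ := h
  -- step: every element is φ x + p • z
  have step : ∀ y : (i : Fin ℓ) → ZMod (p ^ a i), ∃ x z, y = φ x + p • z := by
    intro y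
    obtain ⟨x, hx⟩ := red_surjective hp ha (((u⁻¹ : _ˣ) : Matrix (Fin ℓ) (Fin ℓ) (ZMod p)).mulVec
      (red p a ha y))
    have hred : red p a ha (φ x) = red p a ha y := by
      rw [red_hom_apply' hp0 ha, hx, ← hu, Matrix.mulVec_mulVec, Units.mul_inv, Matrix.one_mulVec]
    obtain ⟨z, hz⟩ := exists_of_red_zero hp ha (y - φ x) (by rw [map_sub, hred, sub_self])
    exact ⟨x, z, by rw [← hz]; abel⟩
  have main : ∀ k : ℕ, ∀ y : (i : Fin ℓ) → ZMod (p ^ a i), ∃ x z, y = φ x + p ^ k • z := by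
    intro k
    induction k with
    | zero => exact fun y => ⟨0, y, by rw [map_zero, pow_zero, one_smul, zero_add]⟩
    | succ k ih =>
      intro y
      obtain ⟨x, z, hyz⟩ := ih y
      obtain ⟨x', z', hz'⟩ := step z
      refine ⟨x + p ^ k • x', z', ?_⟩
      rw [map_add, map_nsmul, hyz, hz', smul_add, add_assoc, smul_smul, ← pow_succ]
  intro y
  set N := Finset.univ.sup a with hN
  obtain ⟨x, z, hyz⟩ := main N y
  have hz0 : p ^ N • z = 0 := by
    funext i
    show p ^ N • z i = 0
    rw [nsmul_eq_mul, show ((p ^ N : ℕ) : ZMod (p ^ (a i))) = 0 from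
      (ZMod.natCast_eq_zero_iff _ _).mpr (pow_dvd_pow p
        (Finset.le_sup (Finset.mem_univ i))), zero_mul]
  exact ⟨x, by rw [hyz, hz0, add_zero]⟩

lemma bijective_iff_isUnit_psi (hp : 1 < p) (ha : ∀ i, 0 < a i)
    (φ : ((i : Fin ℓ) → ZMod (p ^ a i)) →+ ((i : Fin ℓ) → ZMod (p ^ a i))) :
    Bijective φ ↔ IsUnit (Psi p a ha φ) := by
  constructor
  · exact isUnit_psi_of_bijective hp ha φ
  · intro h
    haveI : ∀ i, NeZero (p ^ a i) := fun i => ⟨(pow_pos (by omega : 0 < p) _).ne'⟩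
    have hs := surjective_of_isUnit_psi hp ha φ h
    exact ⟨Finite.injective_iff_surjective.mpr hs, hs⟩

/-- `AddAut` as a subtype of endomorphisms. -/
noncomputable def autEquivSubtype (G : Type*) [AddCommGroup G] :
    AddAut G ≃ {φ : G →+ G // Bijective φ} where
  toFun e := ⟨e.toAddMonoidHom, e.bijective⟩
  invFun φ := AddEquiv.ofBijective φ.1 φ.2
  left_inv e := by
    apply AddEquiv.ext
    intro x
    rfl
  right_inv φ := by
    apply Subtype.ext
    apply AddMonoidHom.ext
    intro x
    rfl

/-- generic fiber counting for additive group homs between finite groups -/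
lemma card_subtype_comp {M N : Type*} [AddCommGroup M] [AddCommGroup N] [Finite M] [Finite N]
    (f : M →+ N) (P : N → Prop) :
    Nat.card {x : M // P (f x)} =
      Nat.card f.ker * Nat.card {y : N // (∃ x, f x = y) ∧ P y} := by
  classical
  have fiberEquiv : ∀ y : {y : N // (∃ x, f x = y) ∧ P y},
      {x : M // f x = y.1} ≃ f.ker := by
    intro y
    have hex := y.2.1
    set x₀ := Classical.choose hex with hx₀def
    have hx₀ : f x₀ = y.1 := Classical.choose_spec hex
    exact
      { toFun := fun x => ⟨x.1 - x₀, by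
          rw [AddMonoidHom.mem_ker, map_sub, x.2, hx₀, sub_self]⟩
        invFun := fun k => ⟨k.1 + x₀, by
          rw [map_add, hx₀, AddMonoidHom.mem_ker.mp k.2, zero_add]⟩
        left_inv := fun x => by apply Subtype.ext; simp
        right_inv := fun k => by apply Subtype.ext; simp }
  let g : {x : M // P (f x)} → {y : N // (∃ x, f x = y) ∧ P y} :=
    fun x => ⟨f x.1, ⟨x.1, rfl⟩, x.2⟩
  have e1 : {x : M // P (f x)} ≃ Σ y : {y : N // (∃ x, f x = y) ∧ P y},
      {x : {x : M // P (f x)} // g x = y} := (Equiv.sigmaFiberEquiv g).symm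
  have e2 : ∀ y : {y : N // (∃ x, f x = y) ∧ P y},
      {x : {x : M // P (f x)} // g x = y} ≃ {x : M // f x = y.1} := by
    intro y
    exact
      { toFun := fun x => ⟨x.1.1, by
          have := congrArg Subtype.val x.2
          exact this⟩
        invFun := fun x => ⟨⟨x.1, by rw [x.2]; exact y.2.2⟩, by
          apply Subtype.ext; exact x.2⟩
        left_inv := fun x => by apply Subtype.ext; apply Subtype.ext; rfl
        right_inv := fun x => by apply Subtype.ext; rfl }
  rw [Nat.card_congr e1]
  rw [Nat.card_congr ((Equiv.sigmaCongrRight (fun y => (e2 y).trans (fiberEquiv y))).trans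
    (Equiv.sigmaEquivProd _ _))]
  rw [Nat.card_prod, mul_comm]

noncomputable def kerEquiv (hp : 1 < p) (ha : ∀ i, 0 < a i) :
    (Psi p a ha).ker ≃ ((j : Fin ℓ) → (i : Fin ℓ) → {y : ZMod (p ^ a i) //
      p ^ a j • y = 0 ∧ ZMod.castHom (dvd_pow_self p (ha i).ne') (ZMod p) y = 0}) := by
  have hp0 : 0 < p := by omega
  exact
  { toFun := fun φ => fun j i => ⟨φ.1 (delta p a j) i, by
      constructor
      · calc p ^ a j • (φ.1 (delta p a j) i) = (p ^ a j • φ.1 (delta p a j)) i := rfl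
        _ = 0 := by rw [smul_hom_delta hp0 φ.1 j]; rfl
      · have h := AddMonoidHom.mem_ker.mp φ.2
        calc _ = Psi p a ha φ.1 i j := rfl
        _ = 0 := by rw [h]; rfl⟩
    invFun := fun y => ⟨mkHom p a hp0 (fun j => fun i => (y j i).1)
        (fun j => funext fun i => (y j i).2.1), by
      rw [AddMonoidHom.mem_ker]
      ext i j
      rw [Psi_mkHom hp ha]
      show ZMod.castHom (dvd_pow_self p (ha i).ne') (ZMod p) ((y j i).1) = (0 : Matrix (Fin ℓ) (Fin ℓ) (ZMod p)) i j
      rw [(y j i).2.2]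
      rfl⟩
    left_inv := fun φ => by
      apply Subtype.ext
      apply AddMonoidHom.ext
      intro v
      exact (hom_apply_eq hp0 φ.1 v).symm
    right_inv := fun y => by
      funext j i
      apply Subtype.ext
      exact congrFun (mkHom_delta hp ha (fun j => fun i => (y j i).1)
        (fun j => funext fun i => (y j i).2.1) j) i }

lemma card_ker_psi (hp : 1 < p) (ha : ∀ i, 0 < a i) :
    Nat.card (Psi p a ha).ker = ∏ j, ∏ i, p ^ (a i - max (a i - a j) 1) := by
  have hp0 : 0 < p := by omega
  rw [Nat.card_congr (kerEquiv hp ha)]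
  rw [Nat.card_pi]
  refine Finset.prod_congr rfl fun j _ => ?_
  rw [Nat.card_pi]
  refine Finset.prod_congr rfl fun i _ => ?_
  exact card_combined p (a i) (a j) hp0 (ha i)

theorem card_aut_pi (hp : 1 < p) (ha : ∀ i, 0 < a i) :
    Nat.card (AddAut ((i : Fin ℓ) → ZMod (p ^ a i))) =
      (∏ j, ∏ i, p ^ (a i - max (a i - a j) 1)) *
        Nat.card {M : Matrix (Fin ℓ) (Fin ℓ) (ZMod p) // M.BlockTriangular a ∧ IsUnit M} := by
  haveI : ∀ i, NeZero (p ^ a i) := fun i => ⟨(pow_pos (by omega : 0 < p) _).ne'⟩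
  haveI : NeZero p := ⟨by omega⟩
  haveI : Finite (((i : Fin ℓ) → ZMod (p ^ a i)) →+ ((i : Fin ℓ) → ZMod (p ^ a i))) :=
    Finite.of_injective (fun f => (f : ((i : Fin ℓ) → ZMod (p ^ a i)) → _)) DFunLike.coe_injective
  rw [Nat.card_congr (autEquivSubtype _)]
  rw [Nat.card_congr (Equiv.subtypeEquivRight (fun φ => bijective_iff_isUnit_psi hp ha φ))]
  rw [card_subtype_comp (Psi p a ha) IsUnit]
  rw [card_ker_psi hp ha]
  congr 1
  apply Nat.card_congr
  exact Equiv.subtypeEquivRight fun M => by rw [psi_range_iff hp ha]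

section Block

variable {F : Type*} [Field F] [Fintype F] [DecidableEq F] {m : ℕ} (b : Fin m → ℕ)

noncomputable def unitsSubtypeEquiv (R : Type*) [Monoid R] : {x : R // IsUnit x} ≃ Rˣ where
  toFun x := x.2.unit
  invFun u := ⟨u, u.isUnit⟩
  left_inv x := Subtype.ext x.2.unit_spec
  right_inv u := Units.ext u.isUnit.unit_spec

def assemble (g : (v : (Finset.univ.image b : Finset ℕ)) →
      Matrix {i // b i = (v : ℕ)} {i // b i = (v : ℕ)} F)
    (f : {q : Fin m × Fin m // b q.1 < b q.2} → F) : Matrix (Fin m) (Fin m) F :=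
  Matrix.of fun i j =>
    if h : b i = b j then g ⟨b j, Finset.mem_image_of_mem b (Finset.mem_univ j)⟩ ⟨i, h⟩ ⟨j, rfl⟩
    else if h2 : b i < b j then f ⟨(i, j), h2⟩ else 0

lemma assemble_bt (g : (v : (Finset.univ.image b : Finset ℕ)) →
      Matrix {i // b i = (v : ℕ)} {i // b i = (v : ℕ)} F)
    (f : {q : Fin m × Fin m // b q.1 < b q.2} → F) :
    (assemble b g f).BlockTriangular b := by
  intro i j hji
  show (if h : b i = b j then _ else _) = 0
  rw [dif_neg hji.ne', dif_neg (by omega)]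

lemma assemble_block (g : (v : (Finset.univ.image b : Finset ℕ)) →
      Matrix {i // b i = (v : ℕ)} {i // b i = (v : ℕ)} F)
    (f : {q : Fin m × Fin m // b q.1 < b q.2} → F)
    (v : ℕ) (hv : v ∈ Finset.univ.image b) :
    (assemble b g f).toSquareBlock b v = g ⟨v, hv⟩ := by
  funext i j
  obtain ⟨i, hi⟩ := i
  obtain ⟨j, hj⟩ := j
  show assemble b g f i j = _
  subst hj
  show (if h : b i = b j then _ else _) = _
  rw [dif_pos hi]

lemma block_isUnit_of_isUnit {M : Matrix (Fin m) (Fin m) F} (hbt : M.BlockTriangular b)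
    (h : IsUnit M) (v : ℕ) (hv : v ∈ Finset.univ.image b) :
    IsUnit (M.toSquareBlock b v) := by
  rw [Matrix.isUnit_iff_isUnit_det, isUnit_iff_ne_zero]
  rw [Matrix.isUnit_iff_isUnit_det, isUnit_iff_ne_zero, hbt.det] at h
  exact Finset.prod_ne_zero_iff.mp h v hv

lemma assemble_isUnit (g : (v : (Finset.univ.image b : Finset ℕ)) →
      Matrix {i // b i = (v : ℕ)} {i // b i = (v : ℕ)} F)
    (f : {q : Fin m × Fin m // b q.1 < b q.2} → F) (hg : ∀ v, IsUnit (g v)) :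
    IsUnit (assemble b g f) := by
  rw [Matrix.isUnit_iff_isUnit_det, isUnit_iff_ne_zero, (assemble_bt b g f).det]
  rw [Finset.prod_ne_zero_iff]
  intro v hv
  rw [assemble_block b g f v hv]
  have := hg ⟨v, hv⟩
  rw [Matrix.isUnit_iff_isUnit_det, isUnit_iff_ne_zero] at this
  exact this

noncomputable def btEquiv :
    {M : Matrix (Fin m) (Fin m) F // M.BlockTriangular b ∧ IsUnit M} ≃
      ((v : (Finset.univ.image b : Finset ℕ)) →
        {A : Matrix {i // b i = (v : ℕ)} {i // b i = (v : ℕ)} F // IsUnit A}) ×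
        ({q : Fin m × Fin m // b q.1 < b q.2} → F) where
  toFun M := (fun v => ⟨M.1.toSquareBlock b v.1, block_isUnit_of_isUnit b M.2.1 M.2.2 v.1 v.2⟩,
    fun q => M.1 q.1.1 q.1.2)
  invFun gf := ⟨assemble b (fun v => (gf.1 v).1) gf.2, assemble_bt b _ _,
    assemble_isUnit b _ _ (fun v => (gf.1 v).2)⟩
  left_inv M := by
    apply Subtype.ext
    funext i j
    show (if h : b i = b j then _ else _) = M.1 i j
    rcases lt_trichotomy (b i) (b j) with h | h | h
    · rw [dif_neg h.ne, dif_pos h]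
    · rw [dif_pos h]
      rfl
    · rw [dif_neg h.ne', dif_neg (by omega)]
      exact (M.2.1 h).symm
  right_inv gf := by
    refine Prod.ext ?_ ?_
    · funext v
      apply Subtype.ext
      show (assemble b (fun v => (gf.1 v).1) gf.2).toSquareBlock b v.1 = (gf.1 v).1
      rw [assemble_block b _ _ v.1 v.2]
    · funext q
      show (if h : b q.1.1 = b q.1.2 then _ else _) = gf.2 q
      rw [dif_neg q.2.ne, dif_pos q.2]

theorem card_bt_unit :
    Nat.card {M : Matrix (Fin m) (Fin m) F // M.BlockTriangular b ∧ IsUnit M} =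
      (Fintype.card F) ^ (Finset.univ.filter (fun q : Fin m × Fin m => b q.1 < b q.2)).card *
        ∏ v ∈ Finset.univ.image b,
          ∏ s : Fin ((Finset.univ.filter (fun i => b i = v)).card),
            ((Fintype.card F) ^ (Finset.univ.filter (fun i => b i = v)).card -
              (Fintype.card F) ^ (s : ℕ)) := by
  rw [Nat.card_congr (btEquiv b), Nat.card_prod, mul_comm]
  congr 1
  · rw [Nat.card_fun, Nat.card_eq_fintype_card, Nat.card_eq_fintype_card, Fintype.card_subtype]
  · rw [Nat.card_pi, ← Finset.prod_coe_sort (Finset.univ.image b)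
      (fun v => ∏ s : Fin ((Finset.univ.filter (fun i => b i = v)).card),
        ((Fintype.card F) ^ (Finset.univ.filter (fun i => b i = v)).card -
          (Fintype.card F) ^ (s : ℕ)))]
    refine Finset.prod_congr rfl fun v _ => ?_
    have e1 : {A : Matrix {i // b i = (v : ℕ)} {i // b i = (v : ℕ)} F // IsUnit A} ≃
        GL (Fin ((Finset.univ.filter (fun i => b i = (v : ℕ))).card)) F := by
      refine (unitsSubtypeEquiv _).trans ?_
      refine (Units.mapEquiv ?_).toEquiv
      exact (Matrix.reindexAlgEquiv F F ((Fintype.equivFin _).trans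
        (finCongr (Fintype.card_subtype _)))).toMulEquiv
    rw [Nat.card_congr e1, Matrix.card_GL_field]

end Block

section RealCalc
open Finset

lemma prod_factor (q : ℝ) (hq : q ≠ 0) (m : ℕ) :
    ∏ s ∈ Finset.range m, (q ^ m - q ^ s) =
      q ^ (m ^ 2) * ∏ s ∈ Finset.Icc 1 m, (1 - q⁻¹ ^ s) := by
  have h1 : ∏ s ∈ Finset.range m, (q ^ m - q ^ s) =
      ∏ t ∈ Finset.Icc 1 m, (q ^ m - q ^ (m - t)) := by
    refine Finset.prod_nbij' (fun s => m - s) (fun t => m - t) ?_ ?_ ?_ ?_ ?_ <;>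
        intro s hs <;> simp only [Finset.mem_range, Finset.mem_Icc] at hs ⊢ <;>
      first
        | omega
        | (congr 2; omega)
  rw [h1]
  have h2 : ∀ t ∈ Finset.Icc 1 m, q ^ m - q ^ (m - t) = q ^ m * (1 - q⁻¹ ^ t) := by
    intro t ht
    rw [Finset.mem_Icc] at ht
    rw [mul_sub, mul_one, pow_sub₀ q hq ht.2, inv_pow]
  rw [Finset.prod_congr rfl h2, Finset.prod_mul_distrib, Finset.prod_const, Nat.card_Icc]
  rw [show m + 1 - 1 = m from rfl, ← pow_mul, ← pow_two]

end RealCalc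

open Finset in
lemma exp_id {ℓ : ℕ} (a : Fin ℓ → ℕ) (ha : ∀ i, 0 < a i) :
    ((∑ j, ∑ i, (a i - max (a i - a j) 1)) +
        (Finset.univ.filter (fun q : Fin ℓ × Fin ℓ => a q.1 < a q.2)).card) +
      ∑ v ∈ Finset.univ.image a, ((Finset.univ.filter (fun i => a i = v)).card) ^ 2 =
      ∑ i, ∑ j, min (a i) (a j) := by
  classical
  have h1 : (Finset.univ.filter (fun q : Fin ℓ × Fin ℓ => a q.1 < a q.2)).card =
      ∑ i, ∑ j, (if a i < a j then 1 else 0) := by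
    rw [Finset.card_filter, ← Finset.univ_product_univ, Finset.sum_product]
  have inner : ∀ i j : Fin ℓ, (∑ v ∈ Finset.univ.image a,
      (if a i = v then 1 else 0) * (if a j = v then 1 else 0)) =
      (if a i = a j then (1 : ℕ) else 0) := by
    intro i j
    by_cases h : a i = a j
    · rw [if_pos h, Finset.sum_eq_single (a i)]
      · rw [if_pos rfl, if_pos h.symm, mul_one]
      · intro v _ hne
        rw [if_neg (fun hh => hne hh.symm), zero_mul]
      · intro habs
        exact absurd (Finset.mem_image_of_mem a (Finset.mem_univ i)) habs
    · rw [if_neg h, Finset.sum_eq_zero]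
      intro v _
      by_cases h1 : a i = v
      · rw [if_pos h1, one_mul, if_neg (fun hh => h (h1.trans hh.symm))]
      · rw [if_neg h1, zero_mul]
  have h3 : (∑ v ∈ Finset.univ.image a, ((Finset.univ.filter (fun i => a i = v)).card) ^ 2) =
      ∑ i, ∑ j, (if a i = a j then 1 else 0) := by
    have : ∀ v ∈ Finset.univ.image a, ((Finset.univ.filter (fun i => a i = v)).card) ^ 2 =
        ∑ i, ∑ j, (if a i = v then 1 else 0) * (if a j = v then 1 else 0) := by
      intro v _
      rw [Finset.card_filter, pow_two, Finset.sum_mul_sum]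
    rw [Finset.sum_congr rfl this, Finset.sum_comm]
    refine Finset.sum_congr rfl fun i _ => ?_
    rw [Finset.sum_comm]
    exact Finset.sum_congr rfl fun j _ => inner i j
  have h0 : (∑ j, ∑ i, (a i - max (a i - a j) 1)) =
      ∑ i, ∑ j, (a i - max (a i - a j) 1) := Finset.sum_comm
  rw [h0, h1, h3, ← Finset.sum_add_distrib, ← Finset.sum_add_distrib]
  refine Finset.sum_congr rfl fun i _ => ?_
  rw [← Finset.sum_add_distrib, ← Finset.sum_add_distrib]
  refine Finset.sum_congr rfl fun j _ => ?_
  have hai := ha i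
  have haj := ha j
  split_ifs <;> omega

lemma cast_card_aut {p ℓ : ℕ} {a : Fin ℓ → ℕ} (hp : p.Prime) (ha : ∀ i, 0 < a i) :
    (Nat.card (AddAut ((i : Fin ℓ) → ZMod (p ^ a i))) : ℝ) =
      (p : ℝ) ^ (∑ i, ∑ j, min (a i) (a j)) *
        ∏ v ∈ Finset.univ.image a,
          ∏ s ∈ Finset.Icc 1 ((Finset.univ.filter (fun i => a i = v)).card),
            (1 - ((p : ℝ))⁻¹ ^ s) := by
  haveI : Fact p.Prime := ⟨hp⟩
  have hp1 : 1 < p := hp.one_lt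
  have hq0 : (p : ℝ) ≠ 0 := by
    have : 0 < p := hp.pos
    positivity
  rw [card_aut_pi hp1 ha, card_bt_unit (F := ZMod p) a, ZMod.card]
  rw [Nat.cast_mul, Nat.cast_mul, Nat.cast_prod, Nat.cast_pow, Nat.cast_prod]
  have hA : (∏ j, ((∏ i, p ^ (a i - max (a i - a j) 1) : ℕ) : ℝ)) =
      (p : ℝ) ^ (∑ j, ∑ i, (a i - max (a i - a j) 1)) := by
    rw [← Finset.prod_pow_eq_pow_sum]
    refine Finset.prod_congr rfl fun j _ => ?_
    rw [Nat.cast_prod, ← Finset.prod_pow_eq_pow_sum]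
    exact Finset.prod_congr rfl fun i _ => by rw [Nat.cast_pow]
  have hC : ∀ v ∈ Finset.univ.image a,
      ((∏ s : Fin ((Finset.univ.filter (fun i => a i = v)).card),
        (p ^ ((Finset.univ.filter (fun i => a i = v)).card) - p ^ (s : ℕ)) : ℕ) : ℝ) =
      (p : ℝ) ^ (((Finset.univ.filter (fun i => a i = v)).card) ^ 2) *
        ∏ s ∈ Finset.Icc 1 ((Finset.univ.filter (fun i => a i = v)).card),
          (1 - ((p : ℝ))⁻¹ ^ s) := by
    intro v _
    set c := (Finset.univ.filter (fun i => a i = v)).card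
    rw [Nat.cast_prod, ← prod_factor (p : ℝ) hq0 c, ← Fin.prod_univ_eq_prod_range
      (fun s => ((p : ℝ) ^ c - (p : ℝ) ^ s)) c]
    refine Finset.prod_congr rfl fun s _ => ?_
    rw [Nat.cast_sub (Nat.pow_le_pow_right hp.one_lt.le s.2.le), Nat.cast_pow, Nat.cast_pow]
  rw [hA, Finset.prod_congr rfl hC, Finset.prod_mul_distrib, Finset.prod_pow_eq_pow_sum]
  rw [← mul_assoc, ← mul_assoc, ← pow_add, ← pow_add, exp_id a ha]

lemma one_div_card_aut {p ℓ : ℕ} {a : Fin ℓ → ℕ} (hp : p.Prime) (ha : ∀ i, 0 < a i) :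
    (1 : ℝ) / Nat.card (AddAut ((i : Fin ℓ) → ZMod (p ^ a i))) =
      ((p : ℝ))⁻¹ ^ (∑ i, ∑ j, min (a i) (a j)) *
        ∏ v ∈ Finset.univ.image a,
          ∏ s ∈ Finset.Icc 1 ((Finset.univ.filter (fun i => a i = v)).card),
            (1 - ((p : ℝ))⁻¹ ^ s)⁻¹ := by
  rw [one_div, cast_card_aut hp ha, mul_inv, ← inv_pow]
  congr 1
  rw [← Finset.prod_inv_distrib]
  refine Finset.prod_congr rfl fun v _ => ?_
  rw [← Finset.prod_inv_distrib]

section Glue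
open Finset

lemma list_sum_fin {M : Type*} [AddCommMonoid M] (l : List ℕ) (f : ℕ → M) :
    ∑ i : Fin l.length, f (l.get i) = (l.map f).sum := by
  rw [← Fin.sum_univ_getElem (l.map f)]
  refine Finset.sum_equiv (finCongr (l.length_map f).symm) (by simp) ?_
  intro i _
  simp

variable {n : ℕ} (lam : Nat.Partition n)

lemma parts_sum_fin {M : Type*} [AddCommMonoid M] (f : ℕ → M) :
    ∑ i : Fin (lam.parts.sort (· ≤ ·)).length, f ((lam.parts.sort (· ≤ ·)).get i) =
      (lam.parts.map f).sum := by
  rw [list_sum_fin]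
  conv_rhs => rw [← Multiset.sort_eq (s := lam.parts) (r := (· ≤ ·))]
  rw [Multiset.map_coe, Multiset.sum_coe]

lemma multiset_card_filter_eq_sum (pr : ℕ → Prop) [DecidablePred pr] (s : Multiset ℕ) :
    (s.filter pr).card = (s.map fun x => if pr x then 1 else 0).sum := by
  refine Multiset.induction_on s (by simp) ?_
  intro a t ih
  by_cases h : pr a <;> simp [h, ih] <;> omega

lemma conj_eq_sum (v : ℕ) :
    conj lam v = ∑ i : Fin (lam.parts.sort (· ≤ ·)).length,
      (if v ≤ (lam.parts.sort (· ≤ ·)).get i then 1 else 0) := by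
  rw [parts_sum_fin lam (fun x => if v ≤ x then 1 else 0)]
  exact multiset_card_filter_eq_sum _ _

lemma get_mem_parts (i : Fin (lam.parts.sort (· ≤ ·)).length) :
    (lam.parts.sort (· ≤ ·)).get i ∈ lam.parts := by
  rw [← Multiset.mem_sort (· ≤ ·)]
  exact List.get_mem _ _

lemma conj_sub (v : ℕ) :
    conj lam v - conj lam (v + 1) =
      (Finset.univ.filter fun i => (lam.parts.sort (· ≤ ·)).get i = v).card := by
  rw [Finset.card_filter]
  have h1 := conj_eq_sum lam v
  have h2 := conj_eq_sum lam (v + 1)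
  have h3 : conj lam v = conj lam (v + 1) +
      ∑ i, (if (lam.parts.sort (· ≤ ·)).get i = v then 1 else 0) := by
    rw [h1, h2, ← Finset.sum_add_distrib]
    refine Finset.sum_congr rfl fun i _ => ?_
    split_ifs <;> omega
  omega

lemma image_get_eq :
    Finset.univ.image (fun i => (lam.parts.sort (· ≤ ·)).get i) = lam.parts.toFinset := by
  ext v
  rw [Finset.mem_image, Multiset.mem_toFinset]
  constructor
  · rintro ⟨i, _, rfl⟩
    exact get_mem_parts lam i
  · intro hv
    rw [← Multiset.mem_sort (· ≤ ·), List.mem_iff_get] at hv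
    obtain ⟨i, hi⟩ := hv
    exact ⟨i, Finset.mem_univ i, hi⟩

lemma toFinset_subset_Icc : lam.parts.toFinset ⊆ Finset.Icc 1 lam.parts.sup := by
  intro v hv
  rw [Multiset.mem_toFinset] at hv
  rw [Finset.mem_Icc]
  exact ⟨lam.parts_pos hv, Multiset.le_sup hv⟩

lemma sum_min_eq :
    (∑ i : Fin (lam.parts.sort (· ≤ ·)).length, ∑ j : Fin (lam.parts.sort (· ≤ ·)).length,
        min ((lam.parts.sort (· ≤ ·)).get i) ((lam.parts.sort (· ≤ ·)).get j)) =
      ∑ v ∈ Finset.Icc 1 lam.parts.sup, conj lam v ^ 2 := by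
  have key : ∀ i j : Fin (lam.parts.sort (· ≤ ·)).length,
      min ((lam.parts.sort (· ≤ ·)).get i) ((lam.parts.sort (· ≤ ·)).get j) =
        ∑ v ∈ Finset.Icc 1 lam.parts.sup,
          (if v ≤ (lam.parts.sort (· ≤ ·)).get i then 1 else 0) *
            (if v ≤ (lam.parts.sort (· ≤ ·)).get j then 1 else 0) := by
    intro i j
    have hi := get_mem_parts lam i
    have hj := get_mem_parts lam j
    have hi1 := lam.parts_pos hi
    have hi2 := Multiset.le_sup hi
    have hj1 := lam.parts_pos hj
    have hj2 := Multiset.le_sup hj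
    have step : ∀ v : ℕ, (if v ≤ (lam.parts.sort (· ≤ ·)).get i then 1 else 0) *
        (if v ≤ (lam.parts.sort (· ≤ ·)).get j then 1 else 0) =
        if v ≤ (lam.parts.sort (· ≤ ·)).get i ∧ v ≤ (lam.parts.sort (· ≤ ·)).get j
          then (1 : ℕ) else 0 := by
      intro v
      split_ifs with h1 h2 h3 <;> first | omega | tauto
    rw [Finset.sum_congr rfl fun v _ => step v, ← Finset.card_filter]
    have hfilt : (Finset.Icc 1 lam.parts.sup).filter
        (fun v => v ≤ (lam.parts.sort (· ≤ ·)).get i ∧ v ≤ (lam.parts.sort (· ≤ ·)).get j) =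
        Finset.Icc 1 (min ((lam.parts.sort (· ≤ ·)).get i) ((lam.parts.sort (· ≤ ·)).get j)) := by
      ext w
      simp only [Finset.mem_filter, Finset.mem_Icc]
      omega
    rw [hfilt, Nat.card_Icc]
    omega
  rw [Finset.sum_congr rfl fun i (_ : i ∈ Finset.univ) =>
    Finset.sum_congr rfl fun j (_ : j ∈ Finset.univ) => key i j]
  rw [Finset.sum_congr rfl fun i (_ : i ∈ Finset.univ) => Finset.sum_comm, Finset.sum_comm]
  refine Finset.sum_congr rfl fun v _ => ?_
  rw [← Finset.sum_mul_sum, ← conj_eq_sum lam v, pow_two]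

end Glue

open Finset in
theorem per_lam {n : ℕ} (lam : Nat.Partition n) (p : ℕ) (hp : p.Prime) :
    (1 : ℝ) / Nat.card (AddAut (Glam p lam)) =
      ((p : ℝ))⁻¹ ^ (∑ i ∈ Finset.Icc 1 lam.parts.sup, conj lam i ^ 2) *
        ∏ i ∈ Finset.Icc 1 lam.parts.sup,
          ∏ s ∈ Finset.Icc 1 (conj lam i - conj lam (i + 1)), (1 - ((p : ℝ))⁻¹ ^ s)⁻¹ := by
  have ha : ∀ i : Fin (lam.parts.sort (· ≤ ·)).length, 0 < (lam.parts.sort (· ≤ ·)).get i :=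
    fun i => lam.parts_pos (get_mem_parts lam i)
  have h := one_div_card_aut (a := fun i => (lam.parts.sort (· ≤ ·)).get i) hp ha
  have hdef : (1 : ℝ) / Nat.card (AddAut (Glam p lam)) =
      1 / Nat.card (AddAut ((i : Fin (lam.parts.sort (· ≤ ·)).length) →
        ZMod (p ^ (lam.parts.sort (· ≤ ·)).get i))) := rfl
  rw [hdef, h, sum_min_eq lam]
  congr 1
  have step1 : ∀ v ∈ Finset.univ.image (fun i => (lam.parts.sort (· ≤ ·)).get i),
      (∏ s ∈ Finset.Icc 1
          ((Finset.univ.filter (fun i => (lam.parts.sort (· ≤ ·)).get i = v)).card),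
        (1 - ((p : ℝ))⁻¹ ^ s)⁻¹) =
      ∏ s ∈ Finset.Icc 1 (conj lam v - conj lam (v + 1)), (1 - ((p : ℝ))⁻¹ ^ s)⁻¹ := by
    intro v _
    rw [conj_sub lam v]
  rw [Finset.prod_congr rfl step1, image_get_eq lam]
  refine Finset.prod_subset (toFinset_subset_Icc lam) ?_
  intro v _ hv
  have h0 : conj lam v - conj lam (v + 1) = 0 := by
    rw [conj_sub lam v]
    rw [Finset.card_eq_zero, Finset.filter_eq_empty_iff]
    intro i _
    intro hgi
    exact hv (by rw [Multiset.mem_toFinset, ← hgi]; exact get_mem_parts lam i)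
  rw [h0, Finset.Icc_eq_empty (by omega), Finset.prod_empty]

end S17

/-- `∑_{|G| = p^n} |Aut G|⁻¹ = ∑_{λ ⊢ n} p^{-∑_i λ'_i²} ∏_i ∏_{s=1}^{λ'_i - λ'_{i+1}}
(1 - p^{-s})⁻¹`, the left sum being over isomorphism classes of abelian groups of order `p^n`
(indexed by partitions of `n`), and `i` running from `1` to `m = λ_1`. -/
theorem stmt17 (p : ℕ) (hp : p.Prime) (n : ℕ) (hn : 0 < n) :
    (∑ lam : Nat.Partition n, (1 : ℝ) / Nat.card (AddAut (Glam p lam))) =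
      ∑ lam : Nat.Partition n,
        ((p : ℝ))⁻¹ ^ (∑ i ∈ Finset.Icc 1 lam.parts.sup, conj lam i ^ 2) *
          ∏ i ∈ Finset.Icc 1 lam.parts.sup,
            ∏ s ∈ Finset.Icc 1 (conj lam i - conj lam (i + 1)), (1 - ((p : ℝ))⁻¹ ^ s)⁻¹ := by
  exact Finset.sum_congr rfl fun lam _ => S17.per_lam lam p hp
end
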